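/- arXiv:1810.07369 — 7 statements merged into one kernel-verified Lean document; each statement's English description precedes it below -/
import Mathlib

section
/- Let K : ℝ² → ℝ be nonpositive and locally bounded, and for p ≥ 1 define α_p(K) = sup{α ∈ ℝ : ∫_{ℝ²} |K(x)|^p (1+|x|)^{2αp+2(p-1)} dx < ∞} (with sup ∅ = -∞). If 1 ≤ p < p₀ then α_p(K) ≥ α_{p₀}(K). -/
open MeasureTheory Real Filter
noncomputable section
abbrev E2 : Type := EuclideanSpace ℝ (Fin 2)
/-- Classical Laplacian on ℝ². -/
def lap (u : E2 → ℝ) (x : E2) : ℝ :=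
  ∑ i : Fin 2, fderiv ℝ (fun y => fderiv ℝ u y (EuclideanSpace.single i 1)) x (EuclideanSpace.single i 1)
/-- The set of admissible exponents α in the definition of α_p(K). -/
def alphaSet (K : E2 → ℝ) (p : ℝ) : Set ℝ :=
  {α : ℝ | Integrable (fun x : E2 => |K x| ^ p * (1 + ‖x‖) ^ (2*α*p + 2*(p-1)))}
/-- α_p(K), with the convention sup ∅ = -∞ (⊥ in `EReal`). -/
def alphaP (K : E2 → ℝ) (p : ℝ) : EReal :=
  sSup ((fun a : ℝ => (a : EReal)) '' alphaSet K p)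

/-- Weighted AM–GM bounds `f ^ θ * g ^ η` by `θ * f + η * g`. -/
theorem MeasureTheory.Integrable.rpow_mul_rpow_of_add_eq_one {X : Type*} [MeasurableSpace X]
    {μ : Measure X} {f g : X → ℝ} (hf : Integrable f μ) (hg : Integrable g μ)
    (hf₀ : 0 ≤ f) (hg₀ : 0 ≤ g) {θ η : ℝ} (hθ : 0 ≤ θ) (hη : 0 ≤ η) (hθη : θ + η = 1) :
    Integrable (fun x => f x ^ θ * g x ^ η) μ := by
  refine ((hf.const_mul θ).add (hg.const_mul η)).mono'
    ((hf.aemeasurable.pow_const θ).mul (hg.aemeasurable.pow_const η)).aestronglyMeasurable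
    (ae_of_all _ fun x => ?_)
  rw [Real.norm_of_nonneg (mul_nonneg (rpow_nonneg (hf₀ x) _) (rpow_nonneg (hg₀ x) _))]
  exact Real.geom_mean_le_arith_mean2_weighted hθ hη (hf₀ x) (hg₀ x) hθη

theorem EReal.sSup_coe_image_le_of_forall_lt_mem {A B : Set ℝ}
    (h : ∀ α ∈ A, ∀ β < α, β ∈ B) :
    sSup ((fun a : ℝ => (a : EReal)) '' A) ≤ sSup ((fun a : ℝ => (a : EReal)) '' B) := by
  refine sSup_le ?_
  rintro _ ⟨α, hα, rfl⟩
  refine le_of_forall_lt_imp_le_of_dense fun c hc => ?_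
  obtain ⟨β, hcβ, hβα⟩ := EReal.exists_between_coe_real hc
  exact hcβ.le.trans (le_sSup ⟨β, h α hα β (EReal.coe_lt_coe_iff.1 hβα), rfl⟩)

theorem mem_alphaSet_of_lt {K : E2 → ℝ} {p p₀ α β : ℝ} (hp : 0 < p)
    (hpp₀ : p < p₀) (hα : α ∈ alphaSet K p₀) (hβα : β < α) : β ∈ alphaSet K p := by
  set θ := p / p₀
  have hθ : 0 < θ := div_pos hp (hp.trans hpp₀)
  have hθ₁ : θ < 1 := (div_lt_one (hp.trans hpp₀)).2 hpp₀
  -- `c` is chosen so that interpolating with weight `θ` between the `p₀`-exponent `α` and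
  -- `(1 + ‖x‖) ^ c` lands exactly on the `p`-exponent `β`; `c < -2` because `β < α`.
  set c := 2 * p * (β - α) / (1 - θ) - 2
  have hc : Integrable (fun x : E2 => (1 + ‖x‖) ^ c) := by
    have h2c : (Module.finrank ℝ E2 : ℝ) < -c := by
      have : 2 * p * (β - α) / (1 - θ) < 0 :=
        div_neg_of_neg_of_pos (by nlinarith) (by linarith)
      simp only [finrank_euclideanSpace_fin, Nat.cast_ofNat]
      linarith
    simpa using integrable_one_add_norm (μ := volume) h2c
  refine ((hα.rpow_mul_rpow_of_add_eq_one hc (fun x => by positivity) (fun x => by positivity)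
    hθ.le (sub_nonneg.2 hθ₁.le) (add_sub_cancel θ 1)).congr (ae_of_all _ fun x => ?_))
  have hw : 0 < 1 + ‖x‖ := by positivity
  dsimp only
  rw [mul_rpow (by positivity) (by positivity), ← rpow_mul (abs_nonneg _), ← rpow_mul hw.le,
    ← rpow_mul hw.le, mul_assoc, ← rpow_add hw]
  have hp₀θ : p₀ * θ = p := mul_div_cancel₀ p (hp.trans hpp₀).ne'
  have hcθ : (1 - θ) * c = 2 * p * (β - α) - 2 * (1 - θ) := by
    simp only [c]
    field_simp [(sub_pos.2 hθ₁).ne']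
  rw [hp₀θ]
  congr 2
  linear_combination (2 * α + 2) * hp₀θ + hcθ

theorem stmt0_general (K : E2 → ℝ)
    (p p₀ : ℝ) (hp : 1 ≤ p) (hpp₀ : p < p₀) :
    alphaP K p₀ ≤ alphaP K p :=
  EReal.sSup_coe_image_le_of_forall_lt_mem fun _ hα _ hβα =>
    mem_alphaSet_of_lt (zero_lt_one.trans_le hp) hpp₀ hα hβα

theorem stmt0 (K : E2 → ℝ) (hmeas : Measurable K) (hK : ∀ x, K x ≤ 0)
    (hloc : ∀ R : ℝ, ∃ M : ℝ, ∀ x : E2, ‖x‖ ≤ R → |K x| ≤ M)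
    (p p₀ : ℝ) (hp : 1 ≤ p) (hpp₀ : p < p₀) :
    alphaP K p₀ ≤ alphaP K p :=
  stmt0_general K p p₀ hp hpp₀
end
end

section
/- Let K : ℝ² → ℝ be measurable with α_{p₀}(K) > -∞ for some p₀ > 1 and α_1(K) > α_{p₀}(K) finite. Then for every ε > 0 there exists p* ∈ (1, p₀) such that α_{p*}(K) ≥ α_1(K) - ε. Consequently α_p(K) → α_1(K) as p → 1⁺. -/
open MeasureTheory Real Filter
noncomputable section
/-!
Hölder's inequality interpolates the pair (p, 2αp + 2(p-1)) of exponents linearly: a weighted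
L¹ bound with exponent β₁ and a weighted L^{p₀} bound give, for p = θ + (1-θ)p₀, an admissible
exponent γ(p) depending continuously on p with γ(1) = β₁. Letting β₁ approach α₁ gives the lower
bound as p → 1⁺. The upper bound holds because α_p is nonincreasing in p, which is Hölder again,
now against the integrable weight (1+|x|)^{-r}, r > 2.
-/

open Topology

theorem MeasureTheory.Integrable.norm_rpow_mul_norm_rpow {α E F : Type*} [MeasurableSpace α]
    {μ : Measure α} [NormedAddCommGroup E] [NormedAddCommGroup F] {f : α → E} {g : α → F}
    (hf : Integrable f μ) (hg : Integrable g μ) {θ : ℝ} (hθ₀ : 0 < θ) (hθ₁ : θ < 1) :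
    Integrable (fun x => ‖f x‖ ^ θ * ‖g x‖ ^ (1 - θ)) μ := by
  have hf' := (memLp_one_iff_integrable.2 hf).norm_rpow_div (ENNReal.ofReal θ)
  have hg' := (memLp_one_iff_integrable.2 hg).norm_rpow_div (ENNReal.ofReal (1 - θ))
  rw [ENNReal.toReal_ofReal hθ₀.le] at hf'
  rw [ENNReal.toReal_ofReal (by linarith)] at hg'
  have : ENNReal.HolderConjugate (1 / ENNReal.ofReal θ) (1 / ENNReal.ofReal (1 - θ)) := by
    rw [ENNReal.holderConjugate_iff, one_div, one_div, inv_inv, inv_inv,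
      ← ENNReal.ofReal_add hθ₀.le (by linarith), add_sub_cancel, ENNReal.ofReal_one]
  exact hf'.integrable_mul hg'

theorem MeasureTheory.Integrable.rpow_mul_rpow_interpolate {α : Type*} [MeasurableSpace α]
    {μ : Measure α} {a w : α → ℝ} (ha : ∀ x, 0 ≤ a x) (hw : ∀ x, 0 < w x) {s₁ s₂ u₁ u₂ θ : ℝ}
    (h₁ : Integrable (fun x => a x ^ s₁ * w x ^ u₁) μ)
    (h₂ : Integrable (fun x => a x ^ s₂ * w x ^ u₂) μ) (hθ₀ : 0 < θ) (hθ₁ : θ < 1)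
    (hs : θ * s₁ + (1 - θ) * s₂ ≠ 0) :
    Integrable (fun x => a x ^ (θ * s₁ + (1 - θ) * s₂) * w x ^ (θ * u₁ + (1 - θ) * u₂)) μ := by
  refine (h₁.norm_rpow_mul_norm_rpow h₂ hθ₀ hθ₁).congr (.of_forall fun x => ?_)
  have ha := ha x
  have hw := hw x
  simp only [norm_mul, norm_eq_abs, abs_rpow_of_nonneg ha, abs_rpow_of_nonneg hw.le,
    abs_of_nonneg ha, abs_of_pos hw]
  rw [mul_rpow (by positivity) (by positivity), mul_rpow (by positivity) (by positivity),
    ← rpow_mul ha, ← rpow_mul ha, ← rpow_mul hw.le, ← rpow_mul hw.le, mul_mul_mul_comm,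
    ← rpow_add' ha (by contrapose! hs; linarith), ← rpow_add hw]
  ring_nf

section

variable {K : E2 → ℝ}

theorem mem_alphaSet_interpolate {p₁ p₂ p β₁ β₂ γ θ : ℝ}
    (h₁ : β₁ ∈ alphaSet K p₁) (h₂ : β₂ ∈ alphaSet K p₂) (hθ₀ : 0 < θ) (hθ₁ : θ < 1)
    (hp : θ * p₁ + (1 - θ) * p₂ = p) (hp_ne : p ≠ 0)
    (hγ : θ * (2 * β₁ * p₁ + 2 * (p₁ - 1)) + (1 - θ) * (2 * β₂ * p₂ + 2 * (p₂ - 1)) =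
      2 * γ * p + 2 * (p - 1)) :
    γ ∈ alphaSet K p := by
  rw [alphaSet, Set.mem_ofPred_eq, ← hγ]
  subst hp
  exact h₁.rpow_mul_rpow_interpolate (fun x => abs_nonneg _) (fun x => by positivity) h₂ hθ₀ hθ₁
    hp_ne

theorem mem_alphaSet_of_lt_s1 {p q α α' : ℝ} (hq : 0 < q) (hqp : q < p)
    (hα : α ∈ alphaSet K p) (hα' : α' < α) : α' ∈ alphaSet K q := by
  have hp : 0 < p := hq.trans hqp
  have hpq : 0 < p - q := sub_pos.2 hqp
  -- the decay rate for which Hölder with θ = q / p lands exactly on the exponent of `α'`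
  set r := 2 + 2 * (α - α') * q * p / (p - q)
  have hr : 2 < r := by
    have := sub_pos.2 hα'
    have : 0 < 2 * (α - α') * q * p / (p - q) := by positivity
    linarith
  have hdecay : Integrable (fun x : E2 => |K x| ^ (0 : ℝ) * (1 + ‖x‖) ^ (-r)) := by
    simp only [rpow_zero, one_mul]
    exact integrable_one_add_norm (by simpa using hr)
  have hs : q / p * p + (1 - q / p) * 0 ≠ 0 := by
    rw [mul_zero, add_zero, div_mul_cancel₀ q hp.ne']
    exact hq.ne'
  have := hα.rpow_mul_rpow_interpolate (fun x => abs_nonneg _) (fun x => by positivity) hdecay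
    (div_pos hq hp) ((div_lt_one hp).2 hqp) hs
  rw [alphaSet, Set.mem_ofPred_eq]
  convert this using 4
  · field_simp
    ring
  · simp only [r]
    field_simp
    ring

theorem coe_le_alphaP {p α : ℝ} (h : α ∈ alphaSet K p) : (α : EReal) ≤ alphaP K p :=
  le_sSup ⟨α, h, rfl⟩

theorem exists_mem_alphaSet_of_lt_alphaP {p : ℝ} {b : EReal} (h : b < alphaP K p) :
    ∃ β ∈ alphaSet K p, b < β := by
  obtain ⟨_, ⟨β, hβ, rfl⟩, hb⟩ := lt_sSup_iff.1 h
  exact ⟨β, hβ, hb⟩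

theorem alphaP_le_alphaP_of_lt {p q : ℝ} (hq : 0 < q) (hqp : q < p) :
    alphaP K p ≤ alphaP K q := by
  refine sSup_le ?_
  rintro _ ⟨α, hα, rfl⟩
  refine le_of_forall_lt_imp_le_of_dense fun b hb => ?_
  obtain ⟨α', hbα', hα'α⟩ := EReal.lt_iff_exists_real_btwn.1 hb
  exact hbα'.le.trans (coe_le_alphaP (mem_alphaSet_of_lt_s1 hq hqp hα (EReal.coe_lt_coe_iff.1 hα'α)))

theorem eventually_lt_alphaP {p₀ β₂ : ℝ} {b : EReal} (hp₀ : 1 < p₀)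
    (hβ₂ : β₂ ∈ alphaSet K p₀) (hb : b < alphaP K 1) : ∀ᶠ p in 𝓝[>] 1, b < alphaP K p := by
  obtain ⟨β₁, hβ₁, hbβ₁⟩ := exists_mem_alphaSet_of_lt_alphaP hb
  have hp₀' : 0 < p₀ - 1 := sub_pos.2 hp₀
  -- p = θ p * 1 + (1 - θ p) * p₀, and γ p solves the exponent equation of the interpolation
  let θ : ℝ → ℝ := fun p => (p₀ - p) / (p₀ - 1)
  let γ : ℝ → ℝ := fun p =>
    (θ p * (2 * β₁) + (1 - θ p) * (2 * β₂ * p₀ + 2 * (p₀ - 1)) - 2 * (p - 1)) / (2 * p)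
  have hγ₁ : γ 1 = β₁ := by
    simp only [γ, θ]
    field_simp
    ring
  have hγ : ContinuousAt γ 1 := ContinuousAt.div (by fun_prop) (by fun_prop) (by norm_num)
  have hbγ : ∀ᶠ p in 𝓝 1, b < γ p :=
    (continuous_coe_real_ereal.continuousAt.comp hγ).eventually_const_lt
      (by rwa [Function.comp_apply, hγ₁])
  filter_upwards [nhdsWithin_le_nhds hbγ, Ioo_mem_nhdsGT hp₀] with p hbp ⟨hp₁, hpp₀⟩
  refine hbp.trans_le (coe_le_alphaP (mem_alphaSet_interpolate hβ₁ hβ₂ (θ := θ p) ?_ ?_ ?_ ?_ ?_))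
  · exact div_pos (sub_pos.2 hpp₀) hp₀'
  · exact (div_lt_one hp₀').2 (by linarith)
  · simp only [θ]
    field_simp
    ring
  · positivity
  · simp only [γ, θ]
    field_simp
    ring

theorem tendsto_alphaP_nhdsGT_one {p₀ : ℝ} (hp₀ : 1 < p₀)
    (hne : (alphaSet K p₀).Nonempty) : Tendsto (alphaP K) (𝓝[>] 1) (𝓝 (alphaP K 1)) :=
  tendsto_order.2 ⟨fun _ hb => eventually_lt_alphaP hp₀ hne.some_mem hb, fun _ hb =>
    eventually_mem_nhdsWithin.mono fun _ hp => (alphaP_le_alphaP_of_lt one_pos hp).trans_lt hb⟩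

end

theorem stmt1_general (K : E2 → ℝ) (p₀ : ℝ) (hp₀ : 1 < p₀)
    (hbot : alphaP K p₀ ≠ ⊥) (a1 : ℝ) (ha1 : alphaP K 1 = (a1 : EReal)) :
    (∀ ε : ℝ, 0 < ε → ∃ pstar : ℝ, 1 < pstar ∧ pstar < p₀ ∧
      ((a1 - ε : ℝ) : EReal) ≤ alphaP K pstar) ∧
    Tendsto (fun p : ℝ => alphaP K p) (nhdsWithin 1 (Set.Ioi 1)) (nhds (a1 : EReal)) := by
  obtain ⟨β₂, hβ₂, -⟩ := exists_mem_alphaSet_of_lt_alphaP (bot_lt_iff_ne_bot.2 hbot)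
  have hlim := ha1 ▸ tendsto_alphaP_nhdsGT_one hp₀ ⟨β₂, hβ₂⟩
  refine ⟨fun ε hε => ?_, hlim⟩
  have hε' : ((a1 - ε : ℝ) : EReal) < a1 := EReal.coe_lt_coe_iff.2 (by linarith)
  obtain ⟨p, hp, hp₁, hpp₀⟩ := ((hlim.eventually (lt_mem_nhds hε')).and (Ioo_mem_nhdsGT hp₀)).exists
  exact ⟨p, hp₁, hpp₀, hp.le⟩

theorem stmt1 (K : E2 → ℝ) (hmeas : Measurable K) (p₀ : ℝ) (hp₀ : 1 < p₀)
    (hbot : alphaP K p₀ ≠ ⊥) (a1 : ℝ) (ha1 : alphaP K 1 = (a1 : EReal))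
    (hlt : alphaP K p₀ < (a1 : EReal)) :
    (∀ ε : ℝ, 0 < ε → ∃ pstar : ℝ, 1 < pstar ∧ pstar < p₀ ∧
      ((a1 - ε : ℝ) : EReal) ≤ alphaP K pstar) ∧
    Tendsto (fun p : ℝ => alphaP K p) (nhdsWithin 1 (Set.Ioi 1)) (nhds (a1 : EReal)) :=
  stmt1_general K p₀ hp₀ hbot a1 ha1
end
end

section
/- Suppose K : ℝ² → ℝ satisfies α_1(K) > 0 and |K(x)| ≤ C(|x|^m + 1) for all x ∈ ℝ² for some constants C, m > 0. Then there exists p > 1 with α_p(K) > 0. -/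
/-
With the weight `w = 1 + ‖x‖ ≥ 1` the growth bound reads `|K| ≤ 2C w^m`, so for `p ≥ 1`
`|K|^p w^e = |K| · |K|^(p-1) w^e ≤ (2C)^(p-1) |K| w^(m(p-1)+e)`.
Thus `α/2 ∈ alphaSet K p` as soon as `m(p-1) + αp + 2(p-1) ≤ 2α`, which holds with equality for
`p = 1 + α/(m+α+2)`.
-/

open MeasureTheory Real Filter
noncomputable section
lemma rpow_add_one_le_two_mul_one_add_rpow {t m : ℝ} (ht : 0 ≤ t) (hm : 0 ≤ m) :
    t ^ m + 1 ≤ 2 * (1 + t) ^ m := by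
  have h1 : (1 : ℝ) ≤ 1 + t := by linarith
  have hpow : t ^ m ≤ (1 + t) ^ m := rpow_le_rpow ht (by linarith) hm
  have hone : (1 : ℝ) ≤ (1 + t) ^ m := one_le_rpow h1 hm
  linarith

lemma rpow_mul_rpow_le_of_le_mul_rpow {a w B m e s p : ℝ} (ha : 0 ≤ a) (hw : 1 ≤ w)
    (hB : 0 ≤ B) (hp : 1 ≤ p) (hgrow : a ≤ B * w ^ m) (hexp : m * (p - 1) + e ≤ s) :
    a ^ p * w ^ e ≤ B ^ (p - 1) * (a * w ^ s) := by
  have hw0 : 0 < w := by linarith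
  have hsplit : a ^ p = a * a ^ (p - 1) := by
    rw [← rpow_one_add' ha (by linarith), add_sub_cancel]
  have hgrow' : a ^ (p - 1) ≤ B ^ (p - 1) * w ^ (m * (p - 1)) := by
    calc a ^ (p - 1) ≤ (B * w ^ m) ^ (p - 1) := rpow_le_rpow ha hgrow (by linarith)
      _ = B ^ (p - 1) * w ^ (m * (p - 1)) := by
        rw [mul_rpow hB (rpow_nonneg hw0.le m), ← rpow_mul hw0.le]
  have hweight : w ^ (m * (p - 1)) * w ^ e ≤ w ^ s := by
    rw [← rpow_add hw0]
    exact rpow_le_rpow_of_exponent_le hw hexp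
  calc a ^ p * w ^ e = a * (a ^ (p - 1) * w ^ e) := by rw [hsplit, mul_assoc]
    _ ≤ a * (B ^ (p - 1) * w ^ (m * (p - 1)) * w ^ e) := by gcongr
    _ = B ^ (p - 1) * (a * (w ^ (m * (p - 1)) * w ^ e)) := by ring
    _ ≤ B ^ (p - 1) * (a * w ^ s) := by gcongr

lemma MeasureTheory.Integrable.abs_rpow_mul_rpow_of_le {X : Type*} [MeasurableSpace X]
    {μ : Measure X} {f w : X → ℝ} {B m e s p : ℝ} (hf : Measurable f) (hw : Measurable w)
    (hw1 : ∀ x, 1 ≤ w x) (hB : 0 ≤ B) (hp : 1 ≤ p) (hgrow : ∀ x, |f x| ≤ B * w x ^ m)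
    (hint : Integrable (fun x => |f x| * w x ^ s) μ) (hexp : m * (p - 1) + e ≤ s) :
    Integrable (fun x => |f x| ^ p * w x ^ e) μ := by
  refine (hint.const_mul (B ^ (p - 1))).mono'
    ((hf.abs.pow_const p).mul (hw.pow_const e)).aestronglyMeasurable
    (Eventually.of_forall fun x => ?_)
  have hw0 : 0 ≤ w x := zero_le_one.trans (hw1 x)
  rw [norm_of_nonneg (by positivity)]
  exact rpow_mul_rpow_le_of_le_mul_rpow (abs_nonneg _) (hw1 x) hB hp (hgrow x) hexp

lemma zero_lt_alphaP_of_mem {K : E2 → ℝ} {p α : ℝ} (hα : 0 < α)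
    (hmem : α ∈ alphaSet K p) :
    (0 : EReal) < alphaP K p :=
  (EReal.coe_pos.mpr hα).trans_le (le_sSup ⟨α, hmem, rfl⟩)

theorem stmt2 (K : E2 → ℝ) (hmeas : Measurable K) (C m : ℝ) (hC : 0 < C) (hm : 0 < m)
    (hgrow : ∀ x : E2, |K x| ≤ C * (‖x‖ ^ m + 1))
    (ha1 : ∃ α : ℝ, 0 < α ∧ Integrable (fun x : E2 => |K x| * (1 + ‖x‖) ^ (2*α))) :
    ∃ p : ℝ, 1 < p ∧ (0 : EReal) < alphaP K p := by
  obtain ⟨α, hα, hint⟩ := ha1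
  have hden : 0 < m + α + 2 := by linarith
  set p := 1 + α / (m + α + 2) with hp
  have hp1 : 1 < p := lt_add_of_pos_right 1 (div_pos hα hden)
  have hgrow' : ∀ x : E2, |K x| ≤ 2 * C * (1 + ‖x‖) ^ m := fun x =>
    calc |K x| ≤ C * (‖x‖ ^ m + 1) := hgrow x
      _ ≤ C * (2 * (1 + ‖x‖) ^ m) := by
        gcongr; exact rpow_add_one_le_two_mul_one_add_rpow (norm_nonneg x) hm.le
      _ = 2 * C * (1 + ‖x‖) ^ m := by ring
  have hexp : m * (p - 1) + (2 * (α / 2) * p + 2 * (p - 1)) = 2 * α := by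
    rw [hp]; field_simp; ring
  refine ⟨p, hp1, zero_lt_alphaP_of_mem (half_pos hα) ?_⟩
  exact hint.abs_rpow_mul_rpow_of_le hmeas (measurable_const.add measurable_norm)
    (fun x => le_add_of_nonneg_right (norm_nonneg x)) (by positivity) hp1.le hgrow' hexp.le
end
end

section
/- Let v : ℝ² → ℝ be a bounded C² function with Δv ∈ L¹(ℝ²). Then ∇v ∈ L²(ℝ²). -/
open MeasureTheory Real Filter
noncomputable section
/-! Testing the identity `Δ(v²/2) = |∇v|² + v Δv` against a cutoff `w` and integrating by
parts gives
  `∫ w |∇v|² = ½ ∫ v² Δw - ∫ w v Δv ≤ ½ ‖v‖∞² ‖Δw‖₁ + ‖v‖∞ ‖Δv‖₁`.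
For `w = η(·/R)` the norm `‖Δw‖₁` does not depend on `R`: in dimension two the factor `R⁻²`
from the chain rule cancels the Jacobian `R²`. Hence `∫_{B_R} |∇v|²` is bounded uniformly
in `R`. -/

theorem EuclideanSpace.norm_clm_sq_eq_sum {ι : Type*} [Fintype ι] [DecidableEq ι]
    (ℓ : EuclideanSpace ℝ ι →L[ℝ] ℝ) :
    ‖ℓ‖ ^ 2 = ∑ i, ℓ (EuclideanSpace.single i 1) ^ 2 := by
  have h : ∀ i, ℓ (EuclideanSpace.single i 1) = (InnerProductSpace.toDual ℝ _).symm ℓ i :=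
    fun i => by simp [← InnerProductSpace.toDual_symm_apply, EuclideanSpace.inner_single_right]
  rw [← (InnerProductSpace.toDual ℝ _).symm.norm_map ℓ, EuclideanSpace.norm_sq_eq]
  simp [h]

section Calculus

variable {E : Type*} [NormedAddCommGroup E] [NormedSpace ℝ E]

theorem ContDiff.fderiv_right_apply {f : E → ℝ} {m n : WithTop ℕ∞} (hf : ContDiff ℝ n f)
    (hmn : m + 1 ≤ n) (u : E) : ContDiff ℝ m (fun x => fderiv ℝ f x u) :=
  (hf.fderiv_right hmn).clm_apply contDiff_const

theorem fderiv_fun_mul_apply {f g : E → ℝ} {x : E} (hf : DifferentiableAt ℝ f x)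
    (hg : DifferentiableAt ℝ g x) (u : E) :
    fderiv ℝ (fun y => f y * g y) x u = f x * fderiv ℝ g x u + g x * fderiv ℝ f x u := by
  simp [fderiv_fun_mul hf hg]

theorem fderiv_comp_smul_apply (f : E → ℝ) (c : ℝ) (x u : E) :
    fderiv ℝ (fun y => f (c • y)) x u = c * fderiv ℝ f (c • x) u := by
  simp [fderiv_comp_smul]

end Calculus

section IntegrationByParts

variable {E : Type*} [NormedAddCommGroup E] [NormedSpace ℝ E] [FiniteDimensional ℝ E]
  [MeasurableSpace E] [BorelSpace E] {μ : Measure E} [μ.IsAddHaarMeasure]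

theorem integral_mul_fderiv_eq_neg_fderiv_mul_of_hasCompactSupport {f g : E → ℝ}
    (hf : ContDiff ℝ 1 f) (hg : ContDiff ℝ 1 g) (hcf : HasCompactSupport f) (u : E) :
    ∫ x, f x * fderiv ℝ g x u ∂μ = -∫ x, fderiv ℝ f x u * g x ∂μ := by
  have hf' := (hf.fderiv_right_apply (m := 0) le_rfl u).continuous
  have hg' := (hg.fderiv_right_apply (m := 0) le_rfl u).continuous
  exact integral_mul_fderiv_eq_neg_fderiv_mul_of_integrable
    ((hf'.mul hg.continuous).integrable_of_hasCompactSupport (hcf.fderiv_apply ℝ u).mul_right)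
    ((hf.continuous.mul hg').integrable_of_hasCompactSupport hcf.mul_right)
    ((hf.continuous.mul hg.continuous).integrable_of_hasCompactSupport hcf.mul_right)
    (fun x _ => hf.differentiable one_ne_zero x) (fun x _ => hg.differentiable one_ne_zero x)

theorem integral_mul_fderiv_sq_eq {v w : E → ℝ} (hv : ContDiff ℝ 2 v) (hw : ContDiff ℝ 2 w)
    (hcw : HasCompactSupport w) (u : E) :
    ∫ x, w x * fderiv ℝ v x u ^ 2 ∂μ =
      (∫ x, v x ^ 2 * fderiv ℝ (fun y => fderiv ℝ w y u) x u ∂μ) / 2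
        - ∫ x, w x * v x * fderiv ℝ (fun y => fderiv ℝ v y u) x u ∂μ := by
  have hv1 : ContDiff ℝ 1 v := hv.of_le one_le_two
  have hw1 : ContDiff ℝ 1 w := hw.of_le one_le_two
  have hDv := hv.fderiv_right_apply (m := 1) (by norm_num) u
  have hDw := hw.fderiv_right_apply (m := 1) (by norm_num) u
  have intA : Integrable (fun x => w x * fderiv ℝ v x u ^ 2) μ :=
    (hw.continuous.mul (hDv.continuous.pow 2)).integrable_of_hasCompactSupport hcw.mul_right
  have intB : Integrable (fun x => v x * (fderiv ℝ w x u * fderiv ℝ v x u)) μ :=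
    (hv.continuous.mul (hDw.continuous.mul hDv.continuous)).integrable_of_hasCompactSupport
      (hcw.fderiv_apply ℝ u).mul_right.mul_left
  have h1 : ∫ x, w x * v x * fderiv ℝ (fun y => fderiv ℝ v y u) x u ∂μ =
      -((∫ x, w x * fderiv ℝ v x u ^ 2 ∂μ) + ∫ x, v x * (fderiv ℝ w x u * fderiv ℝ v x u) ∂μ) := by
    rw [integral_mul_fderiv_eq_neg_fderiv_mul_of_hasCompactSupport (hw1.mul hv1) hDv
      hcw.mul_right u, ← integral_add intA intB]
    congr 2; ext x
    rw [fderiv_fun_mul_apply (hw1.differentiable one_ne_zero x) (hv1.differentiable one_ne_zero x)]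
    ring
  have h2 : ∫ x, v x ^ 2 * fderiv ℝ (fun y => fderiv ℝ w y u) x u ∂μ =
      -(2 * ∫ x, v x * (fderiv ℝ w x u * fderiv ℝ v x u) ∂μ) := by
    calc ∫ x, v x ^ 2 * fderiv ℝ (fun y => fderiv ℝ w y u) x u ∂μ
        = ∫ x, fderiv ℝ (fun y => fderiv ℝ w y u) x u * (v x * v x) ∂μ := by
          congr 1; ext x; ring
      _ = -∫ x, fderiv ℝ w x u * fderiv ℝ (fun y => v y * v y) x u ∂μ := by
          rw [integral_mul_fderiv_eq_neg_fderiv_mul_of_hasCompactSupport hDw (hv1.mul hv1)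
            (hcw.fderiv_apply ℝ u) u, neg_neg]
      _ = -(2 * ∫ x, v x * (fderiv ℝ w x u * fderiv ℝ v x u) ∂μ) := by
          rw [← integral_const_mul]
          congr 2; ext x
          rw [fderiv_fun_mul_apply (hv1.differentiable one_ne_zero x)
            (hv1.differentiable one_ne_zero x)]
          ring
  linarith

end IntegrationByParts

theorem lap_comp_smul (g : E2 → ℝ) (c : ℝ) (x : E2) :
    lap (fun y => g (c • y)) x = c ^ 2 * lap g (c • x) := by
  simp only [lap, Finset.mul_sum, fderiv_comp_smul_apply]
  refine Finset.sum_congr rfl fun i _ => ?_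
  set u := EuclideanSpace.single i (1 : ℝ)
  rw [show (fun y => c * fderiv ℝ g (c • y) u) = c • fun y => fderiv ℝ g (c • y) u from rfl,
    fderiv_const_smul_field]
  simp [fderiv_comp_smul_apply (fun y => fderiv ℝ g y u)]
  ring

theorem integral_abs_lap_comp_smul (g : E2 → ℝ) {c : ℝ} (hc : c ≠ 0) :
    ∫ x, |lap (fun y => g (c • y)) x| = ∫ x, |lap g x| := by
  simp_rw [lap_comp_smul, abs_mul, integral_const_mul]
  rw [Measure.integral_comp_smul volume (fun y => |lap g y|), finrank_euclideanSpace_fin,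
    smul_eq_mul, ← mul_assoc, abs_inv, abs_pow, mul_inv_cancel₀ (by positivity), one_mul]

theorem ContDiff.continuous_fderiv_fderiv_apply {f : E2 → ℝ} (hf : ContDiff ℝ 2 f) (u : E2) :
    Continuous fun x => fderiv ℝ (fun y => fderiv ℝ f y u) x u :=
  ((hf.fderiv_right_apply (m := 1) (by norm_num) u).fderiv_right_apply (m := 0) le_rfl
    u).continuous

theorem ContDiff.continuous_lap {f : E2 → ℝ} (hf : ContDiff ℝ 2 f) : Continuous (lap f) :=
  continuous_finsetSum _ fun i _ => hf.continuous_fderiv_fderiv_apply (EuclideanSpace.single i 1)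

theorem HasCompactSupport.lap {f : E2 → ℝ} (hf : HasCompactSupport f) :
    HasCompactSupport (lap f) := by
  have h : ∀ u : E2, HasCompactSupport fun x => fderiv ℝ (fun y => fderiv ℝ f y u) x u :=
    fun u => (hf.fderiv_apply ℝ u).fderiv_apply ℝ u
  rw [show _root_.lap f = _ from funext fun x => Fin.sum_univ_two _]
  exact (h (EuclideanSpace.single 0 1)).add (h (EuclideanSpace.single 1 1))

theorem integral_mul_norm_fderiv_sq_eq {v w : E2 → ℝ} (hv : ContDiff ℝ 2 v) (hw : ContDiff ℝ 2 w)
    (hcw : HasCompactSupport w) :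
    ∫ x, w x * ‖fderiv ℝ v x‖ ^ 2 = (∫ x, v x ^ 2 * lap w x) / 2 - ∫ x, w x * v x * lap v x := by
  simp_rw [EuclideanSpace.norm_clm_sq_eq_sum, lap, Finset.mul_sum]
  rw [integral_finsetSum _ fun i _ => ?_, integral_finsetSum _ fun i _ => ?_,
    integral_finsetSum _ fun i _ => ?_, Finset.sum_div, ← Finset.sum_sub_distrib]
  · exact Finset.sum_congr rfl fun i _ => integral_mul_fderiv_sq_eq hv hw hcw _
  · exact ((hw.continuous.mul hv.continuous).mul (hv.continuous_fderiv_fderiv_apply _))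
      |>.integrable_of_hasCompactSupport hcw.mul_right.mul_right
  · exact ((hv.continuous.pow 2).mul (hw.continuous_fderiv_fderiv_apply _))
      |>.integrable_of_hasCompactSupport ((hcw.fderiv_apply ℝ _).fderiv_apply ℝ _).mul_left
  · exact (hw.continuous.mul ((hv.fderiv_right_apply (m := 0) (by norm_num) _).continuous.pow 2))
      |>.integrable_of_hasCompactSupport hcw.mul_right

theorem integral_mul_norm_fderiv_sq_le {v w : E2 → ℝ} {M : ℝ} (hv : ContDiff ℝ 2 v)
    (hvM : ∀ x, |v x| ≤ M) (hΔ : Integrable (lap v)) (hw : ContDiff ℝ 2 w)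
    (hcw : HasCompactSupport w) (hw0 : ∀ x, 0 ≤ w x) (hw1 : ∀ x, w x ≤ 1) :
    ∫ x, w x * ‖fderiv ℝ v x‖ ^ 2 ≤ M ^ 2 / 2 * (∫ x, |lap w x|) + M * ∫ x, |lap v x| := by
  have h1 : ∫ x, v x ^ 2 * lap w x ≤ M ^ 2 * ∫ x, |lap w x| := by
    rw [← integral_const_mul]
    refine integral_mono
      (((hv.continuous.pow 2).mul hw.continuous_lap).integrable_of_hasCompactSupport
        hcw.lap.mul_left)
      ((hw.continuous_lap.integrable_of_hasCompactSupport hcw.lap).abs.const_mul _) fun x => ?_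
    calc v x ^ 2 * lap w x ≤ |v x| ^ 2 * |lap w x| := by
          rw [sq_abs]; exact mul_le_mul_of_nonneg_left (le_abs_self _) (sq_nonneg _)
      _ ≤ M ^ 2 * |lap w x| := by gcongr; exact hvM x
  have h2 : -∫ x, w x * v x * lap v x ≤ M * ∫ x, |lap v x| := by
    rw [← integral_neg, ← integral_const_mul]
    refine integral_mono
      (((hw.continuous.mul hv.continuous).mul hv.continuous_lap).integrable_of_hasCompactSupport
        hcw.mul_right.mul_right).neg
      (hΔ.abs.const_mul _) fun x => ?_
    calc -(w x * v x * lap v x) ≤ |w x * v x * lap v x| := neg_le_abs _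
      _ = w x * |v x| * |lap v x| := by rw [abs_mul, abs_mul, abs_of_nonneg (hw0 x)]
      _ ≤ 1 * M * |lap v x| := by gcongr; exacts [hw1 x, hvM x]
      _ = M * |lap v x| := by rw [one_mul]
  rw [integral_mul_norm_fderiv_sq_eq hv hw hcw]
  linarith

theorem setIntegral_closedBall_norm_fderiv_sq_le {v : E2 → ℝ} {M : ℝ} (hv : ContDiff ℝ 2 v)
    (hvM : ∀ x, |v x| ≤ M) (hΔ : Integrable (lap v)) (η : ContDiffBump (0 : E2)) {R : ℝ}
    (hR : 0 < R) :
    ∫ x in Metric.closedBall 0 R, ‖fderiv ℝ v x‖ ^ 2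
      ≤ M ^ 2 / 2 * (∫ x, |lap η x|) + M * ∫ x, |lap v x| := by
  set c := η.rIn / R
  have hc : 0 < c := div_pos η.rIn_pos hR
  have hw : ContDiff ℝ 2 fun x => η (c • x) := η.contDiff.comp (contDiff_const_smul c)
  have hcw : HasCompactSupport fun x => η (c • x) := η.hasCompactSupport.comp_smul hc.ne'
  have hone : ∀ x ∈ Metric.closedBall (0 : E2) R, η (c • x) = 1 := fun x hx => by
    refine η.one_of_mem_closedBall ?_
    rw [mem_closedBall_zero_iff, norm_smul, Real.norm_of_nonneg hc.le] at *
    calc c * ‖x‖ ≤ c * R := by gcongr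
      _ = η.rIn := div_mul_cancel₀ _ hR.ne'
  have hg : Continuous fun x => ‖fderiv ℝ v x‖ ^ 2 := (hv.continuous_fderiv two_ne_zero).norm.pow 2
  calc ∫ x in Metric.closedBall 0 R, ‖fderiv ℝ v x‖ ^ 2
      = ∫ x in Metric.closedBall 0 R, η (c • x) * ‖fderiv ℝ v x‖ ^ 2 :=
        setIntegral_congr_fun Metric.isClosed_closedBall.measurableSet fun x hx => by
          rw [hone x hx, one_mul]
    _ ≤ ∫ x, η (c • x) * ‖fderiv ℝ v x‖ ^ 2 :=
        setIntegral_le_integral ((hw.continuous.mul hg).integrable_of_hasCompactSupport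
          hcw.mul_right) (ae_of_all _ fun x => mul_nonneg η.nonneg (by positivity))
    _ ≤ M ^ 2 / 2 * (∫ x, |lap (fun y => η (c • y)) x|) + M * ∫ x, |lap v x| :=
        integral_mul_norm_fderiv_sq_le hv hvM hΔ hw hcw (fun _ => η.nonneg) (fun _ => η.le_one)
    _ = M ^ 2 / 2 * (∫ x, |lap η x|) + M * ∫ x, |lap v x| := by
        rw [integral_abs_lap_comp_smul η hc.ne']

theorem stmt4 (v : E2 → ℝ) (hv : ContDiff ℝ 2 v) (hb : ∃ M : ℝ, ∀ x, |v x| ≤ M)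
    (hΔ : Integrable (fun x => lap v x)) :
    MemLp (fun x => fderiv ℝ v x) 2 (volume : Measure E2) := by
  obtain ⟨M, hM⟩ := hb
  have hg : Continuous fun x => ‖fderiv ℝ v x‖ ^ 2 := (hv.continuous_fderiv two_ne_zero).norm.pow 2
  rw [memLp_two_iff_integrable_sq_norm (hv.continuous_fderiv two_ne_zero).aestronglyMeasurable]
  exact (aecover_closedBall (x := 0) tendsto_id).integrable_of_integral_bounded_of_nonneg_ae _
    (fun R => hg.continuousOn.integrableOn_compact (isCompact_closedBall 0 R))
    (ae_of_all _ fun x => by positivity)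
    ((eventually_gt_atTop 0).mono fun R hR =>
      setIntegral_closedBall_norm_fderiv_sq_le hv hM hΔ default hR)
end
end

section
/- Let η₀ : ℝ² → ℝ be smooth radial with χ_{B_{1/2}} ≤ η₀ ≤ χ_{B_1}, fix ℓ > q > 1, set a_n = (n,0) and r_n = e^{-n^q} for n ≥ 2, and define K₀(x) = -∑_{n=2}^∞ r_n^{-2} n^{-ℓ} η₀((x-a_n)/r_n). Then for every p > 1, ∫_{ℝ²} |K₀(x)|^p (1+|x|)^{2αp+2(p-1)} dx = +∞ for every α ∈ ℝ, i.e. α_p(K₀) = -∞. -/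
open MeasureTheory Real Filter
open Metric
noncomputable section
/-- The centers a_n = (n,0). -/
def aPt (n : ℕ) : E2 := EuclideanSpace.single (0 : Fin 2) (n : ℝ)
/-- The radii r_n = e^{-n^q}. -/
def rr (q : ℝ) (n : ℕ) : ℝ := Real.exp (-(n : ℝ) ^ q)
/-- The exotic curvature K₀. -/
def Kzero (η₀ : E2 → ℝ) (ℓ q : ℝ) (x : E2) : ℝ :=
  -∑' n : ℕ, (rr q (n+2)) ^ (-(2:ℝ)) * ((n+2 : ℕ) : ℝ) ^ (-ℓ) *
      η₀ ((rr q (n+2))⁻¹ • (x - aPt (n+2)))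

lemma rr_pos (q : ℝ) (n : ℕ) : 0 < rr q n := Real.exp_pos _

lemma rr_le_quarter {q : ℝ} (hq : 1 ≤ q) {n : ℕ} (hn : 2 ≤ n) : rr q n ≤ 1/4 := by
  have hn' : (2:ℝ) ≤ (n:ℝ) := by exact_mod_cast hn
  have h1 : (2:ℝ) ≤ (n:ℝ) ^ q := by
    calc (2:ℝ) ≤ (n:ℝ) := hn'
    _ = (n:ℝ) ^ (1:ℝ) := (Real.rpow_one _).symm
    _ ≤ (n:ℝ) ^ q := Real.rpow_le_rpow_of_exponent_le (by linarith) hq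
  have h2 : rr q n ≤ Real.exp (-2) := by
    unfold rr; exact Real.exp_le_exp.2 (by linarith)
  have h4 : (4:ℝ) ≤ Real.exp 2 := by
    have h := Real.exp_one_gt_d9
    have he : Real.exp 2 = Real.exp 1 * Real.exp 1 := by
      rw [← Real.exp_add]; norm_num
    nlinarith [Real.exp_pos 1]
  have h5 : Real.exp (-2) ≤ 1/4 := by
    rw [Real.exp_neg, inv_eq_one_div]
    exact one_div_le_one_div_of_le (by norm_num) h4
  linarith

lemma dist_aPt (a b : ℕ) : dist (aPt a) (aPt b) = |(a:ℝ) - (b:ℝ)| := by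
  unfold aPt; rw [EuclideanSpace.dist_single_same]; exact Real.dist_eq _ _

lemma Kzero_eval (η₀ : E2 → ℝ)
    (hone : ∀ z : E2, ‖z‖ ≤ 1/2 → η₀ z = 1)
    (hzero : ∀ z : E2, 1 ≤ ‖z‖ → η₀ z = 0)
    {ℓ q : ℝ} (hq : 1 ≤ q) {N : ℕ} (hN : 2 ≤ N) (x : E2)
    (hx : dist x (aPt N) ≤ rr q N / 2) :
    Kzero η₀ ℓ q x = -((rr q N) ^ (-(2:ℝ)) * ((N : ℕ) : ℝ) ^ (-ℓ)) := by
  obtain ⟨k, rfl⟩ : ∃ k, N = k + 2 := ⟨N - 2, by omega⟩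
  simp only [Kzero, neg_inj]
  have hterm : ∀ m : ℕ, m ≠ k →
      (rr q (m+2)) ^ (-(2:ℝ)) * ((m+2 : ℕ) : ℝ) ^ (-ℓ) *
        η₀ ((rr q (m+2))⁻¹ • (x - aPt (m+2))) = 0 := by
    intro m hm
    have hr := rr_pos q (m+2)
    have hd : (1:ℝ) ≤ dist (aPt (k+2)) (aPt (m+2)) := by
      rw [dist_aPt]
      have h0 : ((k:ℤ)+2) - ((m:ℤ)+2) ≠ 0 := by
        intro h; apply hm; omega
      have h1 := Int.one_le_abs h0
      have h2 : (1:ℝ) ≤ |((k:ℝ)+2) - ((m:ℝ)+2)| := by exact_mod_cast h1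
      have h3 : (((k+2:ℕ)):ℝ) = (k:ℝ)+2 := by push_cast; ring
      have h4 : (((m+2:ℕ)):ℝ) = (m:ℝ)+2 := by push_cast; ring
      rw [h3, h4]; exact h2
    have hrk : rr q (k+2) ≤ 1/4 := rr_le_quarter hq (by omega)
    have hrm : rr q (m+2) ≤ 1/4 := rr_le_quarter hq (by omega)
    have htri := dist_triangle (aPt (k+2)) x (aPt (m+2))
    have hd2 : dist (aPt (k+2)) x ≤ 1/8 := by rw [dist_comm]; linarith
    have hge : rr q (m+2) ≤ dist x (aPt (m+2)) := by linarith
    have hnorm : (1:ℝ) ≤ ‖(rr q (m+2))⁻¹ • (x - aPt (m+2))‖ := by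
      rw [norm_smul, norm_inv, Real.norm_eq_abs, abs_of_pos hr, ← dist_eq_norm]
      calc (1:ℝ) = (rr q (m+2))⁻¹ * rr q (m+2) := (inv_mul_cancel₀ hr.ne').symm
      _ ≤ (rr q (m+2))⁻¹ * dist x (aPt (m+2)) :=
          mul_le_mul_of_nonneg_left hge (inv_nonneg.2 hr.le)
    rw [hzero _ hnorm, mul_zero]
  rw [tsum_eq_single k hterm]
  have hr := rr_pos q (k+2)
  have hη : η₀ ((rr q (k+2))⁻¹ • (x - aPt (k+2))) = 1 := by
    apply hone
    rw [norm_smul, norm_inv, Real.norm_eq_abs, abs_of_pos hr, ← dist_eq_norm]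
    calc (rr q (k+2))⁻¹ * dist x (aPt (k+2)) ≤ (rr q (k+2))⁻¹ * (rr q (k+2)/2) :=
        mul_le_mul_of_nonneg_left hx (inv_nonneg.2 hr.le)
    _ = 1/2 := by field_simp
  rw [hη, mul_one]

lemma bound_aux (η₀ : E2 → ℝ)
    (hone : ∀ z : E2, ‖z‖ ≤ 1/2 → η₀ z = 1)
    (hzero : ∀ z : E2, 1 ≤ ‖z‖ → η₀ z = 0)
    {ℓ q : ℝ} (hq : 1 ≤ q) (p β : ℝ) (hp : 0 ≤ p)
    (h : Integrable (fun x : E2 => |Kzero η₀ ℓ q x| ^ p * (1 + ‖x‖) ^ β))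
    (N : ℕ) (hN : 2 ≤ N) :
    ((rr q N) ^ (-(2:ℝ)) * ((N:ℝ)) ^ (-ℓ)) ^ p * (2*(N:ℝ)) ^ (-|β|)
      * ((rr q N / 2)^2 * (volume (closedBall (0:E2) 1)).toReal)
      ≤ ∫ x : E2, |Kzero η₀ ℓ q x| ^ p * (1 + ‖x‖) ^ β := by
  have hrpos := rr_pos q N
  have hrq : rr q N ≤ 1/4 := rr_le_quarter hq hN
  have ht2 : (2:ℝ) ≤ (N:ℝ) := by exact_mod_cast hN
  set c : ℝ := ((rr q N) ^ (-(2:ℝ)) * ((N:ℝ)) ^ (-ℓ)) ^ p * (2*(N:ℝ)) ^ (-|β|) with hc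
  have hcb : ∀ x ∈ closedBall (aPt N) (rr q N / 2),
      c ≤ |Kzero η₀ ℓ q x| ^ p * (1 + ‖x‖) ^ β := by
    intro x hx
    rw [mem_closedBall] at hx
    have hK := Kzero_eval η₀ hone hzero (ℓ := ℓ) hq hN x hx
    have hKpos : 0 < (rr q N) ^ (-(2:ℝ)) * ((N:ℝ)) ^ (-ℓ) :=
      mul_pos (Real.rpow_pos_of_pos hrpos _) (Real.rpow_pos_of_pos (by linarith) _)
    have habs : |Kzero η₀ ℓ q x| = (rr q N) ^ (-(2:ℝ)) * ((N:ℝ)) ^ (-ℓ) := by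
      rw [hK, abs_neg, abs_of_pos hKpos]
    have hNn : dist (aPt N) 0 = (N:ℝ) := by
      rw [dist_zero_right]; unfold aPt
      rw [EuclideanSpace.norm_single, Real.norm_eq_abs]
      exact abs_of_nonneg (by positivity)
    have hxn : ‖x‖ ≤ (N:ℝ) + 1 := by
      calc ‖x‖ = dist x 0 := (dist_zero_right x).symm
      _ ≤ dist x (aPt N) + dist (aPt N) 0 := dist_triangle _ _ _
      _ ≤ rr q N / 2 + (N:ℝ) := by rw [hNn]; linarith
      _ ≤ (N:ℝ) + 1 := by linarith
    have h1x : (1:ℝ) ≤ 1 + ‖x‖ := by linarith [norm_nonneg x]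
    have h2x : 1 + ‖x‖ ≤ 2*(N:ℝ) := by linarith
    have hw : (2*(N:ℝ)) ^ (-|β|) ≤ (1 + ‖x‖) ^ β := by
      calc (2*(N:ℝ)) ^ (-|β|) ≤ (1+‖x‖) ^ (-|β|) :=
          Real.rpow_le_rpow_of_nonpos (by linarith) h2x (neg_nonpos.2 (abs_nonneg β))
      _ ≤ (1+‖x‖) ^ β := Real.rpow_le_rpow_of_exponent_le h1x (neg_abs_le β)
    rw [hc, habs]
    exact mul_le_mul_of_nonneg_left hw (Real.rpow_nonneg hKpos.le p)
  have hvol : volume (closedBall (aPt N) (rr q N / 2))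
      = ENNReal.ofReal ((rr q N / 2)^2) * volume (closedBall (0:E2) 1) := by
    rw [Measure.addHaar_closedBall' volume _ (by positivity : (0:ℝ) ≤ rr q N / 2),
      finrank_euclideanSpace_fin]
  have hvolR : (volume (closedBall (aPt N) (rr q N / 2))).toReal
      = (rr q N / 2)^2 * (volume (closedBall (0:E2) 1)).toReal := by
    rw [hvol, ENNReal.toReal_mul, ENNReal.toReal_ofReal (by positivity)]
  have h1 : c * (volume (closedBall (aPt N) (rr q N / 2))).toReal
      ≤ ∫ x in closedBall (aPt N) (rr q N / 2), |Kzero η₀ ℓ q x| ^ p * (1 + ‖x‖) ^ β :=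
    by
      have := setIntegral_ge_of_const_le measurableSet_closedBall measure_closedBall_lt_top.ne hcb
        h.integrableOn
      rw [smul_eq_mul, mul_comm] at this
      exact this
  have h2 : (∫ x in closedBall (aPt N) (rr q N / 2), |Kzero η₀ ℓ q x| ^ p * (1 + ‖x‖) ^ β)
      ≤ ∫ x : E2, |Kzero η₀ ℓ q x| ^ p * (1 + ‖x‖) ^ β :=
    setIntegral_le_integral h (Eventually.of_forall fun x =>
      mul_nonneg (Real.rpow_nonneg (abs_nonneg _) _)
        (Real.rpow_nonneg (by positivity) _))
  calc c * ((rr q N / 2)^2 * (volume (closedBall (0:E2) 1)).toReal)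
      = c * (volume (closedBall (aPt N) (rr q N / 2))).toReal := by rw [hvolR]
  _ ≤ _ := le_trans h1 h2

lemma alg_aux {q ℓ p β : ℝ} (V : ℝ) (N : ℕ) (hN : 2 ≤ N) :
    ((rr q N) ^ (-(2:ℝ)) * ((N:ℝ)) ^ (-ℓ)) ^ p * (2*(N:ℝ)) ^ (-|β|)
      * ((rr q N / 2)^2 * V)
    = (V * 2 ^ (-|β|) / 4) *
        (Real.exp ((2*p-2) * (N:ℝ) ^ q) * (N:ℝ) ^ (-(ℓ*p + |β|))) := by
  have ht : (0:ℝ) < (N:ℝ) := by positivity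
  have hrdef : rr q N = Real.exp (-((N:ℝ) ^ q)) := rfl
  have A1 : Real.exp (-((N:ℝ)^q)) ^ (-(2:ℝ)) = Real.exp (2 * (N:ℝ)^q) := by
    rw [← Real.exp_mul]; ring_nf
  have A3 : (Real.exp (2*(N:ℝ)^q) * (N:ℝ) ^ (-ℓ)) ^ p
      = Real.exp (2*(N:ℝ)^q*p) * (N:ℝ) ^ (-ℓ*p) := by
    rw [Real.mul_rpow (Real.exp_pos _).le (Real.rpow_nonneg ht.le _), ← Real.exp_mul,
      ← Real.rpow_mul ht.le]
  have A2 : (2*(N:ℝ)) ^ (-|β|) = 2 ^ (-|β|) * (N:ℝ) ^ (-|β|) :=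
    Real.mul_rpow (by norm_num) ht.le
  have A5 : (Real.exp (-((N:ℝ)^q))/2)^2 = Real.exp (-(2*(N:ℝ)^q)) / 4 := by
    rw [div_pow, sq, ← Real.exp_add]
    norm_num
    ring_nf
  have A4 : (N:ℝ) ^ (-ℓ*p) * (N:ℝ) ^ (-|β|) = (N:ℝ) ^ (-(ℓ*p + |β|)) := by
    rw [← Real.rpow_add ht]; ring_nf
  have B1 : Real.exp (2*(N:ℝ)^q*p) * Real.exp (-(2*(N:ℝ)^q))
      = Real.exp ((2*p-2)*(N:ℝ)^q) := by
    rw [← Real.exp_add]; congr 1; ring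
  rw [hrdef, A1, A3, A2, A5, ← A4, ← B1]
  ring

theorem stmt10 (η₀ : E2 → ℝ) (hsm : ContDiff ℝ (⊤ : ℕ∞) η₀)
    (hrad : ∀ z w : E2, ‖z‖ = ‖w‖ → η₀ z = η₀ w)
    (hone : ∀ z : E2, ‖z‖ ≤ 1/2 → η₀ z = 1)
    (h01 : ∀ z : E2, 0 ≤ η₀ z ∧ η₀ z ≤ 1)
    (hzero : ∀ z : E2, 1 ≤ ‖z‖ → η₀ z = 0)
    (ℓ q : ℝ) (hq : 1 < q) (hℓ : q < ℓ) (p : ℝ) (hp : 1 < p) :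
    (∀ α : ℝ, ¬ Integrable
        (fun x : E2 => |Kzero η₀ ℓ q x| ^ p * (1 + ‖x‖) ^ (2*α*p + 2*(p-1)))) ∧
    alphaP (Kzero η₀ ℓ q) p = ⊥ := by
  have hq1 : (1:ℝ) ≤ q := hq.le
  have key : ∀ α : ℝ, ¬ Integrable
      (fun x : E2 => |Kzero η₀ ℓ q x| ^ p * (1 + ‖x‖) ^ (2*α*p + 2*(p-1))) := by
    intro α h
    set β : ℝ := 2*α*p + 2*(p-1) with hβ
    set V : ℝ := (volume (closedBall (0:E2) 1)).toReal with hV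
    have hVpos : 0 < V := by
      rw [hV]
      exact ENNReal.toReal_pos (measure_closedBall_pos volume 0 one_pos).ne'
        measure_closedBall_lt_top.ne
    set C : ℝ := V * 2 ^ (-|β|) / 4 with hC
    have hCpos : 0 < C := by
      rw [hC]
      have : (0:ℝ) < 2 ^ (-|β|) := Real.rpow_pos_of_pos two_pos _
      positivity
    set M : ℝ := ℓ*p + |β| with hM
    have main : ∀ k : ℕ, C * (Real.exp ((2*p-2) * ((k+2:ℕ):ℝ)) / ((k+2:ℕ):ℝ) ^ M)
        ≤ ∫ x : E2, |Kzero η₀ ℓ q x| ^ p * (1 + ‖x‖) ^ β := by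
      intro k
      have hN : 2 ≤ k + 2 := by omega
      have ht : (0:ℝ) < ((k+2:ℕ):ℝ) := by positivity
      have ht1 : (1:ℝ) ≤ ((k+2:ℕ):ℝ) := by
        have : (2:ℝ) ≤ ((k+2:ℕ):ℝ) := by exact_mod_cast hN
        linarith
      have hb := bound_aux η₀ hone hzero hq1 p β (by linarith) h (k+2) hN
      rw [alg_aux V (k+2) hN] at hb
      refine le_trans ?_ hb
      apply mul_le_mul_of_nonneg_left _ hCpos.le
      have htq : ((k+2:ℕ):ℝ) ≤ ((k+2:ℕ):ℝ) ^ q := by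
        calc ((k+2:ℕ):ℝ) = ((k+2:ℕ):ℝ) ^ (1:ℝ) := (Real.rpow_one _).symm
        _ ≤ ((k+2:ℕ):ℝ) ^ q := Real.rpow_le_rpow_of_exponent_le ht1 hq1
      have hexp : Real.exp ((2*p-2)*((k+2:ℕ):ℝ)) ≤ Real.exp ((2*p-2)*((k+2:ℕ):ℝ)^q) :=
        Real.exp_le_exp.2 (mul_le_mul_of_nonneg_left htq (by linarith))
      have htM : ((k+2:ℕ):ℝ) ^ (-M) = 1 / ((k+2:ℕ):ℝ) ^ M := by
        rw [Real.rpow_neg ht.le, one_div]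
      rw [htM, div_eq_mul_one_div]
      exact mul_le_mul_of_nonneg_right hexp (by positivity)
    have grow : Tendsto (fun k : ℕ =>
        C * (Real.exp ((2*p-2) * ((k+2:ℕ):ℝ)) / ((k+2:ℕ):ℝ) ^ M)) atTop atTop := by
      have h1 : Tendsto (fun x : ℝ => C * (Real.exp ((2*p-2)*x) / x ^ M)) atTop atTop :=
        (tendsto_exp_mul_div_rpow_atTop M (2*p-2) (by linarith)).const_mul_atTop hCpos
      have h2 : Tendsto (fun k : ℕ => ((k+2:ℕ):ℝ)) atTop atTop :=
        tendsto_natCast_atTop_atTop.comp (tendsto_add_atTop_nat 2)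
      exact h1.comp h2
    obtain ⟨k, hk⟩ := (grow.eventually_gt_atTop
      (∫ x : E2, |Kzero η₀ ℓ q x| ^ p * (1 + ‖x‖) ^ β)).exists
    exact absurd (main k) (not_le.2 hk)
  refine ⟨key, ?_⟩
  have hemp : alphaSet (Kzero η₀ ℓ q) p = ∅ :=
    Set.eq_empty_iff_forall_notMem.2 fun α hα => key α hα
  rw [alphaP, hemp, Set.image_empty]
  exact sSup_empty
end
end

section
/- With K₀ as defined (ℓ > q > 1, a_n = (n,0), r_n = e^{-n^q}, K₀(x) = -∑_{n≥2} r_n^{-2} n^{-ℓ} η₀((x-a_n)/r_n)), one has α_1(K₀) = (ℓ-1)/2: for every α < (ℓ-1)/2, ∫_{ℝ²} |K₀(x)|(1+|x|)^{2α} dx < ∞, and for α ≥ (ℓ-1)/2 the integral is infinite. -/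
open MeasureTheory Real Filter
set_option maxHeartbeats 1000000
noncomputable section
namespace Stmt11Aux

/-- The n-th summand in `Kzero` (without the minus sign). -/
def tm (η₀ : E2 → ℝ) (ℓ q : ℝ) (n : ℕ) (x : E2) : ℝ :=
  (rr q (n+2)) ^ (-(2:ℝ)) * ((n+2 : ℕ) : ℝ) ^ (-ℓ) *
      η₀ ((rr q (n+2))⁻¹ • (x - aPt (n+2)))

lemma Kzero_eq (η₀ : E2 → ℝ) (ℓ q : ℝ) (x : E2) :
    Kzero η₀ ℓ q x = -∑' n : ℕ, tm η₀ ℓ q n x := rfl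

lemma rr_pos (q : ℝ) (n : ℕ) : 0 < rr q n := Real.exp_pos _

lemma rr_lt_half {q : ℝ} (hq : 1 < q) (n : ℕ) : rr q (n+2) < 1/2 := by
  have h1 : (1:ℝ) ≤ ((n+2:ℕ):ℝ) := by
    push_cast; linarith [(Nat.cast_nonneg n : (0:ℝ) ≤ (n:ℝ))]
  have h2 : (2:ℝ) ≤ ((n+2:ℕ):ℝ) ^ q := by
    calc (2:ℝ) ≤ ((n+2:ℕ):ℝ) := by push_cast; linarith [(Nat.cast_nonneg n : (0:ℝ) ≤ (n:ℝ))]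
    _ = ((n+2:ℕ):ℝ) ^ (1:ℝ) := (Real.rpow_one _).symm
    _ ≤ _ := Real.rpow_le_rpow_of_exponent_le h1 hq.le
  have h3 : rr q (n+2) ≤ Real.exp (-2) := by
    unfold rr
    exact Real.exp_le_exp.mpr (by push_cast at h2 ⊢; linarith)
  have h4 : (3:ℝ) ≤ Real.exp 2 := by
    have := Real.add_one_le_exp (2:ℝ); linarith
  have h5 : Real.exp (-2) < 1/2 := by
    rw [Real.exp_neg]
    rw [show (1:ℝ)/2 = 2⁻¹ by norm_num]
    exact inv_strictAnti₀ (by norm_num) (by linarith)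
  linarith

lemma norm_aPt (n : ℕ) : ‖aPt n‖ = (n : ℝ) := by
  rw [aPt, EuclideanSpace.norm_single, Real.norm_eq_abs, abs_of_nonneg (Nat.cast_nonneg n)]

lemma aPt_sep {m n : ℕ} (h : m ≠ n) : (1:ℝ) ≤ ‖aPt m - aPt n‖ := by
  have he : aPt m - aPt n = EuclideanSpace.single (0 : Fin 2) ((m:ℝ) - n) := by
    ext j; by_cases hj : j = 0 <;> simp [aPt, EuclideanSpace.single_apply, hj]
  rw [he, EuclideanSpace.norm_single, Real.norm_eq_abs]
  have hz : ((m:ℤ) - n) ≠ 0 := sub_ne_zero.mpr (by exact_mod_cast h)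
  have h1 : (1:ℤ) ≤ |(m:ℤ) - n| := Int.one_le_abs hz
  calc (1:ℝ) ≤ ((|(m:ℤ) - n| : ℤ) : ℝ) := by exact_mod_cast h1
  _ = |(m:ℝ) - n| := by push_cast; ring_nf

section main
variable {η₀ : E2 → ℝ} {ℓ q : ℝ}

lemma tm_nonneg (h01 : ∀ z : E2, 0 ≤ η₀ z ∧ η₀ z ≤ 1) (n : ℕ) (x : E2) :
    0 ≤ tm η₀ ℓ q n x := by
  have h1 : (0:ℝ) ≤ (rr q (n+2)) ^ (-(2:ℝ)) := Real.rpow_nonneg (rr_pos q _).le _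
  have h2 : (0:ℝ) ≤ ((n+2:ℕ):ℝ) ^ (-ℓ) := Real.rpow_nonneg (by positivity) _
  exact mul_nonneg (mul_nonneg h1 h2) (h01 _).1

lemma tm_supp (hzero : ∀ z : E2, 1 ≤ ‖z‖ → η₀ z = 0) {n : ℕ} {x : E2}
    (h : tm η₀ ℓ q n x ≠ 0) : ‖x - aPt (n+2)‖ < rr q (n+2) := by
  have hr := rr_pos q (n+2)
  have hη : η₀ ((rr q (n+2))⁻¹ • (x - aPt (n+2))) ≠ 0 := by
    intro h0; exact h (by simp [tm, h0])
  by_contra hc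
  push_neg at hc
  apply hη
  apply hzero
  rw [norm_smul, norm_inv, Real.norm_eq_abs, abs_of_pos hr, inv_mul_eq_div,
    le_div_iff₀ hr]
  linarith

lemma tm_disj (hzero : ∀ z : E2, 1 ≤ ‖z‖ → η₀ z = 0) (hq : 1 < q) {m n : ℕ} {x : E2}
    (hm : tm η₀ ℓ q m x ≠ 0) (hn : tm η₀ ℓ q n x ≠ 0) : m = n := by
  by_contra hmn
  have h1 := tm_supp hzero hm
  have h2 := tm_supp hzero hn
  have h3 := rr_lt_half hq m
  have h4 := rr_lt_half hq n
  have h5 := aPt_sep (show m+2 ≠ n+2 by omega)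
  have htri := dist_triangle (aPt (m+2)) x (aPt (n+2))
  rw [dist_eq_norm, dist_eq_norm, dist_eq_norm] at htri
  have h6 : ‖aPt (m+2) - x‖ = ‖x - aPt (m+2)‖ := norm_sub_rev _ _
  linarith

lemma summable_tm (hzero : ∀ z : E2, 1 ≤ ‖z‖ → η₀ z = 0) (hq : 1 < q) (x : E2) :
    Summable (fun n => tm η₀ ℓ q n x) := by
  by_cases h : ∀ n, tm η₀ ℓ q n x = 0
  · exact summable_of_ne_finset_zero (s := ∅) (fun b _ => h b)
  · push_neg at h
    obtain ⟨n₀, hn₀⟩ := h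
    refine summable_of_ne_finset_zero (s := {n₀}) (fun b hb => ?_)
    by_contra hb0
    exact hb (Finset.mem_singleton.mpr (tm_disj hzero hq hb0 hn₀))

lemma Kzero_abs (h01 : ∀ z : E2, 0 ≤ η₀ z ∧ η₀ z ≤ 1) (x : E2) :
    |Kzero η₀ ℓ q x| = ∑' n, tm η₀ ℓ q n x := by
  rw [Kzero_eq, abs_neg, abs_of_nonneg (tsum_nonneg (fun n => tm_nonneg h01 n x))]

lemma tm_cont (hsm : ContDiff ℝ (⊤ : ℕ∞) η₀) (n : ℕ) : Continuous (tm η₀ ℓ q n) :=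
  continuous_const.mul (hsm.continuous.comp
    (by fun_prop))

lemma w_cont (α : ℝ) : Continuous fun x : E2 => (1 + ‖x‖) ^ (2*α) :=
  Continuous.rpow_const (continuous_const.add continuous_norm)
    (fun x => Or.inl (by positivity))

lemma ofReal_eq (hzero : ∀ z : E2, 1 ≤ ‖z‖ → η₀ z = 0)
    (h01 : ∀ z : E2, 0 ≤ η₀ z ∧ η₀ z ≤ 1) (hq : 1 < q) (α : ℝ) (x : E2) :
    ENNReal.ofReal (|Kzero η₀ ℓ q x| * (1 + ‖x‖) ^ (2*α)) =
      ∑' n, ENNReal.ofReal (tm η₀ ℓ q n x * (1 + ‖x‖) ^ (2*α)) := by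
  rw [Kzero_abs h01, ← tsum_mul_right]
  exact ENNReal.ofReal_tsum_of_nonneg
    (fun n => mul_nonneg (tm_nonneg h01 n x) (by positivity))
    ((summable_tm hzero hq x).mul_right _)

lemma vol_cb (x : E2) {r : ℝ} (hr : 0 ≤ r) :
    volume (Metric.closedBall x r) =
      ENNReal.ofReal (r ^ 2) * volume (Metric.closedBall (0:E2) 1) := by
  have hfr : Module.finrank ℝ E2 = 2 := finrank_euclideanSpace_fin
  rw [MeasureTheory.Measure.addHaar_closedBall' (volume : Measure E2) x hr, hfr]

lemma rr_cancel {n : ℕ} (ℓ : ℝ) : rr q (n+2) ^ (-(2:ℝ)) * rr q (n+2) ^ (2:ℕ) = 1 := by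
  have hr := rr_pos q (n+2)
  rw [← Real.rpow_natCast (rr q (n+2)) 2, ← Real.rpow_add hr]
  norm_num

lemma lint_upper (hsm : ContDiff ℝ (⊤ : ℕ∞) η₀) (hzero : ∀ z : E2, 1 ≤ ‖z‖ → η₀ z = 0)
    (h01 : ∀ z : E2, 0 ≤ η₀ z ∧ η₀ z ≤ 1) (hq : 1 < q) (α : ℝ) (n : ℕ) :
    ∫⁻ x, ENNReal.ofReal (tm η₀ ℓ q n x * (1 + ‖x‖) ^ (2*α)) ≤
      ENNReal.ofReal (((n+2:ℕ):ℝ) ^ (-ℓ) * ((((n+2:ℕ):ℝ)+2) ^ (2*α) + 1)) *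
        volume (Metric.closedBall (0:E2) 1) := by
  set r := rr q (n+2) with hrdef
  have hr : 0 < r := rr_pos q _
  have hrh : r < 1/2 := rr_lt_half hq n
  set m : ℝ := ((n+2:ℕ):ℝ) with hmdef
  have hm1 : (1:ℝ) ≤ m := by rw [hmdef]; push_cast; linarith [(Nat.cast_nonneg n : (0:ℝ) ≤ (n:ℝ))]
  set c : ℝ := r ^ (-(2:ℝ)) * m ^ (-ℓ) with hcdef
  have hc : 0 ≤ c := mul_nonneg (Real.rpow_nonneg hr.le _) (Real.rpow_nonneg (by linarith) _)
  set B : ℝ := (m+2) ^ (2*α) + 1 with hBdef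
  have hB0 : 0 ≤ B := by
    have : (0:ℝ) ≤ (m+2) ^ (2*α) := Real.rpow_nonneg (by linarith) _
    linarith
  have hb : ∀ x : E2, ENNReal.ofReal (tm η₀ ℓ q n x * (1 + ‖x‖) ^ (2*α)) ≤
      (Metric.closedBall (aPt (n+2)) r).indicator (fun _ => ENNReal.ofReal (c * B)) x := by
    intro x
    by_cases hx : x ∈ Metric.closedBall (aPt (n+2)) r
    · rw [Set.indicator_of_mem hx]
      apply ENNReal.ofReal_le_ofReal
      have hd : ‖x - aPt (n+2)‖ ≤ r := by
        rw [Metric.mem_closedBall, dist_eq_norm] at hx; exact hx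
      have hxn : ‖x‖ ≤ m + 1 := by
        have h7 : ‖x‖ ≤ ‖x - aPt (n+2)‖ + ‖aPt (n+2)‖ := by
          calc ‖x‖ = ‖(x - aPt (n+2)) + aPt (n+2)‖ := by
                rw [show x - aPt (n+2) + aPt (n+2) = x by abel]
          _ ≤ _ := norm_add_le _ _
        have h8 : ‖aPt (n+2)‖ = m := norm_aPt _
        rw [h8] at h7; linarith
      have hw : (1 + ‖x‖) ^ (2*α) ≤ B := by
        rcases le_or_gt 0 (2*α) with hα | hα
        · have h9 : (1 + ‖x‖) ^ (2*α) ≤ (m+2) ^ (2*α) :=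
            Real.rpow_le_rpow (by positivity) (by linarith) hα
          linarith
        · have h9 : (1 + ‖x‖) ^ (2*α) ≤ 1 :=
            Real.rpow_le_one_of_one_le_of_nonpos (by linarith [norm_nonneg x]) hα.le
          have h10 : (0:ℝ) ≤ (m+2) ^ (2*α) := Real.rpow_nonneg (by linarith) _
          linarith
      have htm : tm η₀ ℓ q n x ≤ c := by
        rw [tm]
        calc r ^ (-(2:ℝ)) * m ^ (-ℓ) * η₀ (r⁻¹ • (x - aPt (n+2))) ≤ c * 1 := by
              rw [hcdef]
              exact mul_le_mul_of_nonneg_left (h01 _).2 hc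
        _ = c := mul_one c
      have hwn : (0:ℝ) ≤ (1 + ‖x‖) ^ (2*α) := by positivity
      calc tm η₀ ℓ q n x * (1 + ‖x‖) ^ (2*α) ≤ c * (1 + ‖x‖) ^ (2*α) :=
            mul_le_mul_of_nonneg_right htm hwn
      _ ≤ c * B := mul_le_mul_of_nonneg_left hw hc
    · rw [Set.indicator_of_notMem hx]
      have htm0 : tm η₀ ℓ q n x = 0 := by
        by_contra h
        exact hx (Metric.mem_closedBall.mpr (by
          rw [dist_eq_norm]; exact (tm_supp hzero h).le))
      simp [htm0]
  calc ∫⁻ x, ENNReal.ofReal (tm η₀ ℓ q n x * (1 + ‖x‖) ^ (2*α)) ≤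
      ∫⁻ x, (Metric.closedBall (aPt (n+2)) r).indicator (fun _ => ENNReal.ofReal (c * B)) x :=
        lintegral_mono hb
  _ = ENNReal.ofReal (c * B) * volume (Metric.closedBall (aPt (n+2)) r) :=
        lintegral_indicator_const measurableSet_closedBall _
  _ = ENNReal.ofReal (c * B) * (ENNReal.ofReal (r ^ 2) * volume (Metric.closedBall (0:E2) 1)) := by
        rw [vol_cb _ hr.le]
  _ = ENNReal.ofReal (c * B * r ^ 2) * volume (Metric.closedBall (0:E2) 1) := by
        rw [← mul_assoc, ← ENNReal.ofReal_mul (mul_nonneg hc hB0)]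
  _ = ENNReal.ofReal (m ^ (-ℓ) * B) * volume (Metric.closedBall (0:E2) 1) := by
        congr 2
        have h12 := rr_cancel (q := q) (n := n) ℓ
        rw [← hrdef] at h12
        have h : c * B * r ^ 2 = (r ^ (-(2:ℝ)) * r ^ (2:ℕ)) * (m ^ (-ℓ) * B) := by
          rw [hcdef]; ring
        rw [h, h12, one_mul]

lemma summable_u (hq : 1 < q) (hℓ : q < ℓ) {α : ℝ} (hα : α < (ℓ-1)/2) :
    Summable (fun n : ℕ => ((n+2:ℕ):ℝ) ^ (-ℓ) * ((((n+2:ℕ):ℝ)+2) ^ (2*α) + 1)) := by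
  have hℓ1 : 1 < ℓ := hq.trans hℓ
  have s1 : Summable (fun n : ℕ => ((n+2:ℕ):ℝ) ^ (-ℓ)) :=
    (summable_nat_add_iff 2).mpr (Real.summable_nat_rpow.mpr (by linarith))
  have s2 : Summable (fun n : ℕ => ((n+2:ℕ):ℝ) ^ (2*α-ℓ)) :=
    (summable_nat_add_iff 2).mpr (Real.summable_nat_rpow.mpr (by linarith))
  set C : ℝ := max ((2:ℝ) ^ (2*α)) 1 with hCdef
  have hC1 : (1:ℝ) ≤ C := le_max_right _ _
  have key : ∀ n : ℕ, ((n+2:ℕ):ℝ) ^ (-ℓ) * ((((n+2:ℕ):ℝ)+2) ^ (2*α) + 1) ≤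
      C * ((n+2:ℕ):ℝ) ^ (2*α-ℓ) + ((n+2:ℕ):ℝ) ^ (-ℓ) := by
    intro n
    set m : ℝ := ((n+2:ℕ):ℝ) with hmdef
    have hm : (2:ℝ) ≤ m := by rw [hmdef]; push_cast; linarith [(Nat.cast_nonneg n : (0:ℝ) ≤ (n:ℝ))]
    have hm0 : (0:ℝ) < m := by linarith
    have h1 : (m+2) ^ (2*α) ≤ C * m ^ (2*α) := by
      rcases le_or_gt 0 (2*α) with h | h
      · calc (m+2) ^ (2*α) ≤ (2*m) ^ (2*α) :=
              Real.rpow_le_rpow (by linarith) (by linarith) h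
        _ = 2 ^ (2*α) * m ^ (2*α) := Real.mul_rpow (by norm_num) hm0.le
        _ ≤ C * m ^ (2*α) :=
              mul_le_mul_of_nonneg_right (le_max_left _ _) (Real.rpow_nonneg hm0.le _)
      · calc (m+2) ^ (2*α) ≤ m ^ (2*α) :=
              Real.rpow_le_rpow_of_nonpos hm0 (by linarith) h.le
        _ ≤ C * m ^ (2*α) := by
              nlinarith [Real.rpow_nonneg hm0.le (2*α)]
    have h2 : m ^ (-ℓ) * (m+2) ^ (2*α) ≤ C * m ^ (2*α-ℓ) := by
      have he : m ^ (2*α-ℓ) = m ^ (2*α) * m ^ (-ℓ) := by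
        rw [← Real.rpow_add hm0]; ring_nf
      rw [he]
      have hml : (0:ℝ) ≤ m ^ (-ℓ) := Real.rpow_nonneg hm0.le _
      nlinarith [h1, Real.rpow_nonneg hm0.le (2*α)]
    nlinarith [h2]
  refine Summable.of_nonneg_of_le (fun n => ?_) key ((s2.mul_left C).add s1)
  have h1 : (0:ℝ) ≤ ((n+2:ℕ):ℝ) ^ (-ℓ) := Real.rpow_nonneg (by positivity) _
  have h2 : (0:ℝ) ≤ (((n+2:ℕ):ℝ)+2) ^ (2*α) := Real.rpow_nonneg (by positivity) _
  nlinarith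

lemma lint_lower (hone : ∀ z : E2, ‖z‖ ≤ 1/2 → η₀ z = 1)
    (hq : 1 < q) (hℓ : q < ℓ) {α : ℝ} (hα : (ℓ-1)/2 ≤ α) (n : ℕ) :
    ENNReal.ofReal (((n+2:ℕ):ℝ) ^ (2*α-ℓ) * (1/4)) * volume (Metric.closedBall (0:E2) 1) ≤
      ∫⁻ x, ENNReal.ofReal (tm η₀ ℓ q n x * (1 + ‖x‖) ^ (2*α)) := by
  set r := rr q (n+2) with hrdef
  have hr : 0 < r := rr_pos q _
  have hrh : r < 1/2 := rr_lt_half hq n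
  set m : ℝ := ((n+2:ℕ):ℝ) with hmdef
  have hm2 : (2:ℝ) ≤ m := by rw [hmdef]; push_cast; linarith [(Nat.cast_nonneg n : (0:ℝ) ≤ (n:ℝ))]
  have hαpos : (0:ℝ) ≤ 2*α := by have : 1 < ℓ := hq.trans hℓ; linarith
  set c : ℝ := r ^ (-(2:ℝ)) * m ^ (-ℓ) * m ^ (2*α) with hcdef
  have hc : 0 ≤ c := by
    have := Real.rpow_nonneg hr.le (-(2:ℝ))
    have := Real.rpow_nonneg (show (0:ℝ) ≤ m by linarith) (-ℓ)
    have := Real.rpow_nonneg (show (0:ℝ) ≤ m by linarith) (2*α)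
    positivity
  have hb : ∀ x : E2,
      (Metric.closedBall (aPt (n+2)) (r/2)).indicator (fun _ => ENNReal.ofReal c) x ≤
        ENNReal.ofReal (tm η₀ ℓ q n x * (1 + ‖x‖) ^ (2*α)) := by
    intro x
    by_cases hx : x ∈ Metric.closedBall (aPt (n+2)) (r/2)
    · rw [Set.indicator_of_mem hx]
      apply ENNReal.ofReal_le_ofReal
      have hd : ‖x - aPt (n+2)‖ ≤ r/2 := by
        rw [Metric.mem_closedBall, dist_eq_norm] at hx; exact hx
      have hη : η₀ (r⁻¹ • (x - aPt (n+2))) = 1 := by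
        apply hone
        rw [norm_smul, norm_inv, Real.norm_eq_abs, abs_of_pos hr]
        calc r⁻¹ * ‖x - aPt (n+2)‖ ≤ r⁻¹ * (r/2) :=
              mul_le_mul_of_nonneg_left hd (inv_nonneg.mpr hr.le)
        _ = 1/2 := by field_simp
      have hw : m ^ (2*α) ≤ (1 + ‖x‖) ^ (2*α) := by
        apply Real.rpow_le_rpow (by linarith) ?_ hαpos
        have h7 : ‖aPt (n+2)‖ ≤ ‖aPt (n+2) - x‖ + ‖x‖ := by
          calc ‖aPt (n+2)‖ = ‖(aPt (n+2) - x) + x‖ := by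
                rw [show aPt (n+2) - x + x = aPt (n+2) by abel]
          _ ≤ _ := norm_add_le _ _
        have h8 : ‖aPt (n+2)‖ = m := norm_aPt _
        have h9 : ‖aPt (n+2) - x‖ = ‖x - aPt (n+2)‖ := norm_sub_rev _ _
        rw [h8, h9] at h7
        linarith
      rw [tm, hη, mul_one]
      rw [hcdef]
      calc r ^ (-(2:ℝ)) * m ^ (-ℓ) * m ^ (2*α) ≤
            r ^ (-(2:ℝ)) * m ^ (-ℓ) * (1 + ‖x‖) ^ (2*α) := by
            apply mul_le_mul_of_nonneg_left hw
            have h10 : (0:ℝ) ≤ r ^ (-(2:ℝ)) := Real.rpow_nonneg hr.le _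
            have h11 : (0:ℝ) ≤ m ^ (-ℓ) := Real.rpow_nonneg (by linarith) _
            positivity
      _ = _ := rfl
    · rw [Set.indicator_of_notMem hx]
      exact zero_le
  calc ENNReal.ofReal (m ^ (2*α-ℓ) * (1/4)) * volume (Metric.closedBall (0:E2) 1) =
      ENNReal.ofReal c * volume (Metric.closedBall (aPt (n+2)) (r/2)) := by
        rw [vol_cb _ (by linarith : (0:ℝ) ≤ r/2), ← mul_assoc,
          ← ENNReal.ofReal_mul hc]
        congr 2
        have h12 := rr_cancel (q := q) (n := n) ℓ
        rw [← hrdef] at h12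
        have h13 : m ^ (2*α-ℓ) = m ^ (2*α) * m ^ (-ℓ) := by
          rw [← Real.rpow_add (by linarith : (0:ℝ) < m)]; ring_nf
        have h : c * (r/2) ^ 2 = (r ^ (-(2:ℝ)) * r ^ (2:ℕ)) * (m ^ (-ℓ) * m ^ (2*α)) * (1/4) := by
          rw [hcdef]; ring
        rw [h13, h, h12, one_mul]; ring
  _ = ∫⁻ x, (Metric.closedBall (aPt (n+2)) (r/2)).indicator (fun _ => ENNReal.ofReal c) x :=
        (lintegral_indicator_const measurableSet_closedBall _).symm
  _ ≤ _ := lintegral_mono hb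

end main
end Stmt11Aux

open Stmt11Aux in
theorem stmt11 (η₀ : E2 → ℝ) (hsm : ContDiff ℝ (⊤ : ℕ∞) η₀)
    (hrad : ∀ z w : E2, ‖z‖ = ‖w‖ → η₀ z = η₀ w)
    (hone : ∀ z : E2, ‖z‖ ≤ 1/2 → η₀ z = 1)
    (h01 : ∀ z : E2, 0 ≤ η₀ z ∧ η₀ z ≤ 1)
    (hzero : ∀ z : E2, 1 ≤ ‖z‖ → η₀ z = 0)
    (ℓ q : ℝ) (hq : 1 < q) (hℓ : q < ℓ) :
    (∀ α : ℝ, α < (ℓ-1)/2 →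
      Integrable (fun x : E2 => |Kzero η₀ ℓ q x| * (1 + ‖x‖) ^ (2*α))) ∧
    (∀ α : ℝ, (ℓ-1)/2 ≤ α →
      ¬ Integrable (fun x : E2 => |Kzero η₀ ℓ q x| * (1 + ‖x‖) ^ (2*α))) := by
  have hFmeas : ∀ (α : ℝ) (n : ℕ),
      Measurable (fun x : E2 => ENNReal.ofReal (tm η₀ ℓ q n x * (1 + ‖x‖) ^ (2*α))) :=
    fun α n => ENNReal.measurable_ofReal.comp
      ((tm_cont hsm n).mul (w_cont α)).measurable
  have hgmeas : ∀ α : ℝ,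
      Measurable (fun x : E2 => |Kzero η₀ ℓ q x| * (1 + ‖x‖) ^ (2*α)) := by
    intro α
    have hg : (fun x : E2 => |Kzero η₀ ℓ q x| * (1 + ‖x‖) ^ (2*α)) =
        fun x => (∑' n, ENNReal.ofReal (tm η₀ ℓ q n x * (1 + ‖x‖) ^ (2*α))).toReal := by
      funext x
      rw [← ofReal_eq hzero h01 hq α x, ENNReal.toReal_ofReal (by positivity)]
    rw [hg]
    exact (Measurable.ennreal_tsum (fun n => hFmeas α n)).ennreal_toReal
  have hlint : ∀ α : ℝ,
      ∫⁻ x, ENNReal.ofReal (|Kzero η₀ ℓ q x| * (1 + ‖x‖) ^ (2*α)) =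
        ∑' n, ∫⁻ x, ENNReal.ofReal (tm η₀ ℓ q n x * (1 + ‖x‖) ^ (2*α)) := by
    intro α
    rw [lintegral_congr (fun x => ofReal_eq hzero h01 hq α x)]
    exact lintegral_tsum (fun n => (hFmeas α n).aemeasurable)
  constructor
  · intro α hα
    refine ⟨(hgmeas α).aestronglyMeasurable, ?_⟩
    rw [hasFiniteIntegral_iff_ofReal (ae_of_all _ fun x => by positivity)]
    rw [hlint α]
    calc ∑' n, ∫⁻ x, ENNReal.ofReal (tm η₀ ℓ q n x * (1 + ‖x‖) ^ (2*α)) ≤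
        ∑' n : ℕ, ENNReal.ofReal (((n+2:ℕ):ℝ) ^ (-ℓ) * ((((n+2:ℕ):ℝ)+2) ^ (2*α) + 1)) *
          volume (Metric.closedBall (0:E2) 1) :=
          ENNReal.tsum_le_tsum (fun n => lint_upper hsm hzero h01 hq α n)
    _ = (∑' n : ℕ, ENNReal.ofReal (((n+2:ℕ):ℝ) ^ (-ℓ) * ((((n+2:ℕ):ℝ)+2) ^ (2*α) + 1))) *
          volume (Metric.closedBall (0:E2) 1) := ENNReal.tsum_mul_right
    _ = ENNReal.ofReal (∑' n : ℕ, ((n+2:ℕ):ℝ) ^ (-ℓ) * ((((n+2:ℕ):ℝ)+2) ^ (2*α) + 1)) *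
          volume (Metric.closedBall (0:E2) 1) := by
          rw [ENNReal.ofReal_tsum_of_nonneg (fun n => by
            have h1 : (0:ℝ) ≤ ((n+2:ℕ):ℝ) ^ (-ℓ) := Real.rpow_nonneg (by positivity) _
            have h2 : (0:ℝ) ≤ (((n+2:ℕ):ℝ)+2) ^ (2*α) := Real.rpow_nonneg (by positivity) _
            nlinarith) (summable_u hq hℓ hα)]
    _ < ⊤ := ENNReal.mul_lt_top ENNReal.ofReal_lt_top measure_closedBall_lt_top
  · intro α hα hInt
    have hfi := hInt.hasFiniteIntegral
    rw [hasFiniteIntegral_iff_ofReal (ae_of_all _ fun x => by positivity)] at hfi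
    rw [hlint α] at hfi
    set V := volume (Metric.closedBall (0:E2) 1) with hVdef
    have hV0 : V ≠ 0 := (Metric.measure_closedBall_pos volume 0 one_pos).ne'
    have hsum : (∑' n : ℕ, ENNReal.ofReal (((n+2:ℕ):ℝ) ^ (2*α-ℓ) * (1/4))) * V < ⊤ := by
      rw [← ENNReal.tsum_mul_right]
      exact lt_of_le_of_lt (ENNReal.tsum_le_tsum (fun n => lint_lower hone hq hℓ hα n)) hfi
    have h1 : (∑' n : ℕ, ENNReal.ofReal (((n+2:ℕ):ℝ) ^ (2*α-ℓ) * (1/4))) ≠ ⊤ := by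
      intro htop
      rw [htop, ENNReal.top_mul hV0] at hsum
      exact (lt_irrefl _ hsum)
    have h2 : Summable (fun n : ℕ => ((n+2:ℕ):ℝ) ^ (2*α-ℓ) * (1/4)) := by
      have h3 := ENNReal.summable_toReal h1
      refine h3.congr (fun n => ?_)
      rw [ENNReal.toReal_ofReal]
      have : (0:ℝ) ≤ ((n+2:ℕ):ℝ) ^ (2*α-ℓ) := Real.rpow_nonneg (by positivity) _
      linarith
    have h3 : Summable (fun n : ℕ => ((n+2:ℕ):ℝ) ^ (2*α-ℓ)) := by
      have := h2.mul_right 4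
      refine this.congr (fun n => ?_)
      ring
    have h4 : Summable (fun n : ℕ => ((n+2:ℕ):ℝ) ^ (-(1:ℝ))) := by
      refine Summable.of_nonneg_of_le (fun n => Real.rpow_nonneg (by positivity) _)
        (fun n => Real.rpow_le_rpow_of_exponent_le ?_ (by linarith)) h3
      push_cast; linarith [(Nat.cast_nonneg n : (0:ℝ) ≤ (n:ℝ))]
    have h5 : Summable (fun n : ℕ => ((n:ℕ):ℝ) ^ (-(1:ℝ))) := (summable_nat_add_iff 2).mp h4
    have h6 := Real.summable_nat_rpow.mp h5
    linarith
end
end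

section
/- Fix ℓ > q > 1 and let K₀ be the bump curvature of Theorem 1.2 with α* = (ℓ-q)/2. Let ξ ∈ L^∞(ℝ²) be continuous, and define F₂(x) = r_n^{-2} n^{-ℓ} ∫_{B_{r_n}(a_n)} e^{2ξ(y)} |y|^{2α*} η₀((y-a_n)/r_n) ln|x-y| dy. Then there are constants c, C > 0 (depending on ‖ξ‖_∞, ℓ, q) such that for all large n: 0 ≤ F₂(-a_n) ≤ C n^{-ℓ+2α*} ln(2n+1) and -F₂(a_n) ≥ c n^{-ℓ+2α*+q} = c. In particular liminf_{n→∞} |F₂(a_n) - F₂(-a_n)| ≥ c > 0. -/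
open MeasureTheory Real Filter
noncomputable section
section Helpers
open Metric

lemma volE2 (a : E2) {ρ : ℝ} (hρ : 0 ≤ ρ) :
    volume (ball a ρ) = ENNReal.ofReal (ρ^2) * volume (ball (0:E2) 1) := by
  rw [Measure.addHaar_ball volume a hρ, finrank_euclideanSpace_fin]

lemma logLintBound (a : E2) {r : ℝ} (hr0 : 0 < r) (hr1 : r ≤ 1) :
    ∫⁻ y in ball a r, ENNReal.ofReal (-Real.log ‖a - y‖) ≤
      (ENNReal.ofReal (-Real.log r) + 1) * (ENNReal.ofReal (r^2) * volume (ball (0:E2) 1)) := by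
  set V := volume (ball (0:E2) 1) with hV
  have hmeas : Measurable (fun y : E2 => -Real.log ‖a - y‖) :=
    (Real.measurable_log.comp ((continuous_const.sub continuous_id).norm).measurable).neg
  have hnn : 0 ≤ᶠ[ae (volume.restrict (ball a r))] (fun y : E2 => -Real.log ‖a - y‖) := by
    refine (ae_restrict_iff' measurableSet_ball).2 (ae_of_all _ fun y hy => ?_)
    have h1 : ‖a - y‖ < r := by
      rw [← dist_eq_norm]; rw [mem_ball, dist_comm] at hy; exact hy
    have := Real.log_nonpos (norm_nonneg _) (h1.le.trans hr1)
    simp only [Pi.zero_apply]; linarith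
  rw [lintegral_eq_lintegral_meas_lt _ hnn hmeas.aemeasurable]
  set T := -Real.log r with hT
  have hT0 : 0 ≤ T := by
    have := Real.log_nonpos hr0.le hr1; simp [hT]; linarith
  have hsub : ∀ t : ℝ, 0 < t →
      (volume.restrict (ball a r)) {y : E2 | t < -Real.log ‖a - y‖} ≤
        ENNReal.ofReal ((Real.exp (-t))^2) * V := by
    intro t ht
    have hs : {y : E2 | t < -Real.log ‖a - y‖} ⊆ ball a (Real.exp (-t)) := by
      intro y hy
      simp only [Set.mem_setOf_eq] at hy
      rcases eq_or_lt_of_le (norm_nonneg (a - y)) with h0 | h0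
      · rw [← h0] at hy; simp at hy; linarith
      · have : Real.log ‖a - y‖ < -t := by linarith
        have h2 : ‖a - y‖ < Real.exp (-t) := by
          have := Real.exp_lt_exp.2 this
          rwa [Real.exp_log h0] at this
        rw [mem_ball, dist_eq_norm, ← norm_sub_rev]
        exact h2
    calc (volume.restrict (ball a r)) {y : E2 | t < -Real.log ‖a - y‖}
        ≤ volume {y : E2 | t < -Real.log ‖a - y‖} := Measure.restrict_le_self _
      _ ≤ volume (ball a (Real.exp (-t))) := measure_mono hs
      _ = ENNReal.ofReal ((Real.exp (-t))^2) * V := volE2 a (Real.exp_nonneg _)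
  have hsplit : (Set.Ioi (0:ℝ)) = Set.Ioc 0 T ∪ Set.Ioi T := (Set.Ioc_union_Ioi_eq_Ioi hT0).symm
  rw [hsplit, lintegral_union measurableSet_Ioi (Set.Ioc_disjoint_Ioi le_rfl)]
  have hball : volume (ball a r) = ENNReal.ofReal (r^2) * V := volE2 a hr0.le
  have hpart1 : ∫⁻ t in Set.Ioc (0:ℝ) T,
      (volume.restrict (ball a r)) {y : E2 | t < -Real.log ‖a - y‖}
      ≤ ENNReal.ofReal T * (ENNReal.ofReal (r^2) * V) := by
    calc ∫⁻ t in Set.Ioc (0:ℝ) T,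
        (volume.restrict (ball a r)) {y : E2 | t < -Real.log ‖a - y‖}
        ≤ ∫⁻ _t in Set.Ioc (0:ℝ) T, (ENNReal.ofReal (r^2) * V) := by
          refine setLIntegral_mono' measurableSet_Ioc fun t _ => ?_
          calc (volume.restrict (ball a r)) {y : E2 | t < -Real.log ‖a - y‖}
              ≤ (volume.restrict (ball a r)) Set.univ := measure_mono (Set.subset_univ _)
            _ = volume (ball a r) := by simp
            _ = _ := hball
      _ = (ENNReal.ofReal (r^2) * V) * volume (Set.Ioc (0:ℝ) T) := setLIntegral_const _ _
      _ = ENNReal.ofReal T * (ENNReal.ofReal (r^2) * V) := by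
          rw [Real.volume_Ioc, sub_zero]; ring
  have hexpint : IntegrableOn (fun t : ℝ => Real.exp (-t)) (Set.Ioi T) := by
    have := exp_neg_integrableOn_Ioi T (zero_lt_one)
    simpa using this
  have hpart2 : ∫⁻ t in Set.Ioi T,
      (volume.restrict (ball a r)) {y : E2 | t < -Real.log ‖a - y‖}
      ≤ ENNReal.ofReal (r^2) * V := by
    have hexp : ∀ t ∈ Set.Ioi T, (Real.exp (-t))^2 ≤ r * Real.exp (-t) := by
      intro t ht
      have h1 : Real.exp (-t) ≤ r := by
        have h2 : Real.exp (-t) ≤ Real.exp (-T) := Real.exp_le_exp.2 (by simp [le_of_lt (Set.mem_Ioi.1 ht)])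
        rwa [hT, neg_neg, Real.exp_log hr0] at h2
      nlinarith [Real.exp_pos (-t)]
    calc ∫⁻ t in Set.Ioi T,
        (volume.restrict (ball a r)) {y : E2 | t < -Real.log ‖a - y‖}
        ≤ ∫⁻ t in Set.Ioi T, ENNReal.ofReal r * ENNReal.ofReal (Real.exp (-t)) * V := by
          refine setLIntegral_mono' measurableSet_Ioi fun t ht => ?_
          refine (hsub t (lt_of_le_of_lt hT0 ht)).trans ?_
          rw [← ENNReal.ofReal_mul hr0.le]
          exact mul_le_mul_of_nonneg_right (ENNReal.ofReal_le_ofReal (hexp t ht)) (zero_le (a := V))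
      _ = ENNReal.ofReal r * (∫⁻ t in Set.Ioi T, ENNReal.ofReal (Real.exp (-t))) * V := by
          rw [lintegral_mul_const' _ _ measure_ball_lt_top.ne,
            lintegral_const_mul' _ _ (by simp : ENNReal.ofReal r ≠ ⊤)]
      _ = ENNReal.ofReal r * ENNReal.ofReal r * V := by
          rw [← ofReal_integral_eq_lintegral_ofReal hexpint
            (ae_of_all _ fun t => (Real.exp_pos _).le), integral_exp_neg_Ioi, hT, neg_neg,
            Real.exp_log hr0]
      _ = ENNReal.ofReal (r^2) * V := by
          rw [← ENNReal.ofReal_mul hr0.le]; ring_nf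
  calc _ ≤ ENNReal.ofReal T * (ENNReal.ofReal (r^2) * V) + ENNReal.ofReal (r^2) * V :=
        add_le_add hpart1 hpart2
    _ = (ENNReal.ofReal T + 1) * (ENNReal.ofReal (r^2) * V) := by ring

lemma logIntegrableOn (a : E2) {r : ℝ} (hr0 : 0 < r) (hr1 : r ≤ 1) :
    IntegrableOn (fun y : E2 => -Real.log ‖a - y‖) (ball a r) := by
  have hmeas : Measurable (fun y : E2 => -Real.log ‖a - y‖) :=
    (Real.measurable_log.comp ((continuous_const.sub continuous_id).norm).measurable).neg
  have hnn : ∀ y ∈ ball a r, 0 ≤ -Real.log ‖a - y‖ := by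
    intro y hy
    have h1 : ‖a - y‖ < r := by
      rw [← dist_eq_norm]; rw [mem_ball, dist_comm] at hy; exact hy
    have := Real.log_nonpos (norm_nonneg _) (h1.le.trans hr1)
    linarith
  refine ⟨hmeas.aestronglyMeasurable, ?_⟩
  rw [hasFiniteIntegral_iff_norm]
  have hcong : ∀ᵐ y ∂(volume.restrict (ball a r)),
      ENNReal.ofReal ‖-Real.log ‖a - y‖‖ = ENNReal.ofReal (-Real.log ‖a - y‖) := by
    refine (ae_restrict_iff' measurableSet_ball).2 (ae_of_all _ fun y hy => ?_)
    rw [Real.norm_eq_abs, abs_of_nonneg (hnn y hy)]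
  rw [lintegral_congr_ae hcong]
  refine lt_of_le_of_lt (logLintBound a hr0 hr1) ?_
  exact ENNReal.mul_lt_top (by simp) (ENNReal.mul_lt_top (by simp) measure_ball_lt_top)

lemma logIntegralBound (a : E2) {r : ℝ} (hr0 : 0 < r) (hr1 : r ≤ 1) :
    ∫ y in ball a r, -Real.log ‖a - y‖ ≤
      (-Real.log r + 1) * (r^2 * (volume (ball (0:E2) 1)).toReal) := by
  have hmeas : Measurable (fun y : E2 => -Real.log ‖a - y‖) :=
    (Real.measurable_log.comp ((continuous_const.sub continuous_id).norm).measurable).neg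
  have hnn : 0 ≤ᶠ[ae (volume.restrict (ball a r))] (fun y : E2 => -Real.log ‖a - y‖) := by
    refine (ae_restrict_iff' measurableSet_ball).2 (ae_of_all _ fun y hy => ?_)
    have h1 : ‖a - y‖ < r := by
      rw [← dist_eq_norm]; rw [mem_ball, dist_comm] at hy; exact hy
    have := Real.log_nonpos (norm_nonneg _) (h1.le.trans hr1)
    simp only [Pi.zero_apply]; linarith
  have hT0 : 0 ≤ -Real.log r := by
    have := Real.log_nonpos hr0.le hr1; linarith
  rw [integral_eq_lintegral_of_nonneg_ae hnn hmeas.aestronglyMeasurable.restrict]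
  have hfin : (ENNReal.ofReal (-Real.log r) + 1) *
      (ENNReal.ofReal (r^2) * volume (ball (0:E2) 1)) ≠ ⊤ :=
    (ENNReal.mul_lt_top (by simp) (ENNReal.mul_lt_top (by simp) measure_ball_lt_top)).ne
  refine le_trans (ENNReal.toReal_mono hfin (logLintBound a hr0 hr1)) ?_
  rw [ENNReal.toReal_mul, ENNReal.toReal_mul, ENNReal.toReal_add (by simp) (by simp),
    ENNReal.toReal_ofReal hT0, ENNReal.toReal_ofReal (by positivity), ENNReal.toReal_one]

end Helpers

set_option maxHeartbeats 2000000 in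
theorem stmt19 (η₀ : E2 → ℝ) (hsm : ContDiff ℝ (⊤ : ℕ∞) η₀)
    (hrad : ∀ z w : E2, ‖z‖ = ‖w‖ → η₀ z = η₀ w)
    (hone : ∀ z : E2, ‖z‖ ≤ 1/2 → η₀ z = 1)
    (h01 : ∀ z : E2, 0 ≤ η₀ z ∧ η₀ z ≤ 1)
    (hzero : ∀ z : E2, 1 ≤ ‖z‖ → η₀ z = 0)
    (ℓ q : ℝ) (hq : 1 < q) (hℓ : q < ℓ)
    (ξ : E2 → ℝ) (hξc : Continuous ξ) (M : ℝ) (hM : ∀ x, |ξ x| ≤ M) :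
    let αs : ℝ := (ℓ - q)/2
    let F₂ : ℕ → E2 → ℝ := fun n x =>
      (rr q n) ^ (-(2:ℝ)) * (n : ℝ) ^ (-ℓ) *
        ∫ y in Metric.ball (aPt n) (rr q n),
          exp (2 * ξ y) * ‖y‖ ^ (2*αs) * η₀ ((rr q n)⁻¹ • (y - aPt n)) * log ‖x - y‖
    ∃ c C : ℝ, 0 < c ∧ 0 < C ∧
      (∃ N : ℕ, ∀ n : ℕ, N ≤ n →
        0 ≤ F₂ n (-aPt n) ∧
        F₂ n (-aPt n) ≤ C * (n : ℝ) ^ (-ℓ + 2*αs) * log (2*(n:ℝ)+1) ∧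
        c ≤ -F₂ n (aPt n)) ∧
      c ≤ Filter.liminf (fun n : ℕ => |F₂ n (aPt n) - F₂ n (-aPt n)|) Filter.atTop := by
  intro αs F₂
  have h2αs : 2*αs = ℓ - q := by simp only [αs]; ring
  have hq0 : (0:ℝ) < q := by linarith
  have hlq : (0:ℝ) < ℓ - q := by linarith
  set V : ENNReal := volume (Metric.ball (0:E2) 1) with hV
  set pi' : ℝ := V.toReal with hpi'
  have hpi0 : 0 < pi' := ENNReal.toReal_pos (Metric.measure_ball_pos volume _ one_pos).ne'
    measure_ball_lt_top.ne
  set P2 : ℝ := (2:ℝ) ^ (ℓ - q) with hP2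
  have hP20 : 0 < P2 := Real.rpow_pos_of_pos (by norm_num) _
  set c : ℝ := Real.exp (-(2*M)) * pi' / (4 * P2) with hc
  set C : ℝ := Real.exp (2*M) * pi' * P2 with hC
  have hc0 : 0 < c := by positivity
  have hC0 : 0 < C := by positivity
  have key : ∀ n : ℕ, 1 ≤ n →
      (0 ≤ F₂ n (-aPt n) ∧
        F₂ n (-aPt n) ≤ C * (n : ℝ) ^ (-ℓ + 2*αs) * Real.log (2*(n:ℝ)+1) ∧
        c ≤ -F₂ n (aPt n)) ∧ F₂ n (-aPt n) - F₂ n (aPt n) ≤ 5 * C := by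
    intro n hn
    have hnR : (1:ℝ) ≤ (n:ℝ) := by exact_mod_cast hn
    have hn0 : (0:ℝ) < (n:ℝ) := by linarith
    set a : E2 := aPt n with ha
    set r : ℝ := rr q n with hr
    have hr0 : 0 < r := Real.exp_pos _
    have hTq1 : 1 ≤ (n:ℝ)^q := Real.one_le_rpow hnR hq0.le
    have hrhalf : r ≤ 1/2 := by
      have h2e : (2:ℝ) ≤ Real.exp 1 := by
        have := Real.exp_one_gt_d9; linarith
      have h1 : r ≤ Real.exp (-1) := Real.exp_le_exp.2 (by linarith)
      have hmul : Real.exp (-1) * Real.exp 1 = 1 := by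
        rw [← Real.exp_add]; norm_num
      nlinarith [Real.exp_pos (-1)]
    have hr1 : r ≤ 1 := by linarith
    have hlogr : Real.log r = -(n:ℝ)^q := Real.log_exp _
    have hna : ‖a‖ = (n:ℝ) := by
      rw [ha, aPt, EuclideanSpace.norm_single]; simp
    have hlog2n0 : 0 ≤ Real.log (2*(n:ℝ)+1) := Real.log_nonneg (by linarith)
    set G : E2 → ℝ := fun y => Real.exp (2 * ξ y) * ‖y‖ ^ (2*αs) * η₀ (r⁻¹ • (y - a))
      with hG
    have hF : ∀ x : E2, F₂ n x =
        r ^ (-(2:ℝ)) * (n : ℝ) ^ (-ℓ) * ∫ y in Metric.ball a r, G y * Real.log ‖x - y‖ := by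
      intro x; rfl
    set pref : ℝ := r ^ (-(2:ℝ)) * (n : ℝ) ^ (-ℓ) with hpref
    have hpref0 : 0 < pref :=
      mul_pos (Real.rpow_pos_of_pos hr0 _) (Real.rpow_pos_of_pos hn0 _)
    have hG0 : ∀ y : E2, 0 ≤ G y := fun y =>
      mul_nonneg (mul_nonneg (Real.exp_nonneg _) (Real.rpow_nonneg (norm_nonneg _) _))
        (h01 _).1
    set B₁ : ℝ := Real.exp (2*M) * ((n:ℝ)+1) ^ (ℓ - q) with hB₁
    have hB₁0 : 0 ≤ B₁ := by positivity
    have hay : ∀ y ∈ Metric.ball a r, ‖a - y‖ < r := by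
      intro y hy
      rw [Metric.mem_ball, dist_eq_norm, ← norm_sub_rev] at hy; exact hy
    have hGub : ∀ y ∈ Metric.ball a r, G y ≤ B₁ := by
      intro y hy
      have hyub : ‖y‖ ≤ (n:ℝ)+1 := by
        have h1 : ‖y‖ ≤ ‖a‖ + ‖y - a‖ := by
          simpa using norm_add_le a (y - a)
        have h2 : ‖y - a‖ < r := by rw [norm_sub_rev]; exact hay y hy
        rw [hna] at h1; linarith
      have e1 : Real.exp (2 * ξ y) ≤ Real.exp (2*M) :=
        Real.exp_le_exp.2 (by have := (abs_le.1 (hM y)).2; linarith)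
      have e2 : ‖y‖ ^ (2*αs) ≤ ((n:ℝ)+1) ^ (ℓ - q) := by
        rw [h2αs]
        exact Real.rpow_le_rpow (norm_nonneg _) hyub hlq.le
      calc G y ≤ Real.exp (2*M) * ((n:ℝ)+1) ^ (ℓ - q) * 1 := by
            refine mul_le_mul (mul_le_mul e1 e2 (Real.rpow_nonneg (norm_nonneg _) _)
              (Real.exp_nonneg _)) (h01 _).2 (h01 _).1 (by positivity)
        _ = B₁ := by rw [mul_one]
    -- measurability of integrands
    have hlogmeas : ∀ x : E2, Measurable (fun y : E2 => Real.log ‖x - y‖) := fun x =>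
      Real.measurable_log.comp ((continuous_const.sub continuous_id).norm).measurable
    have hGcont : Continuous G := by
      refine ((Real.continuous_exp.comp (continuous_const.mul hξc)).mul
        (continuous_norm.rpow_const fun x => Or.inr (by rw [h2αs]; exact hlq.le))).mul
        (hsm.continuous.comp ?_)
      exact (show Continuous (fun y : E2 => r⁻¹ • (y - a)) by fun_prop)
    have hfmeas : ∀ x : E2, AEStronglyMeasurable (fun y : E2 => G y * Real.log ‖x - y‖)
        (volume.restrict (Metric.ball a r)) := fun x =>
      (hGcont.measurable.mul (hlogmeas x)).aestronglyMeasurable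
    -- integrability at x = a
    have hL : IntegrableOn (fun y : E2 => -Real.log ‖a - y‖) (Metric.ball a r) :=
      logIntegrableOn a hr0 hr1
    have hbd : ∀ y ∈ Metric.ball a r,
        ‖G y * Real.log ‖a - y‖‖ ≤ B₁ * (-Real.log ‖a - y‖) := by
      intro y hy
      have hlog0 : Real.log ‖a - y‖ ≤ 0 :=
        Real.log_nonpos (norm_nonneg _) ((hay y hy).le.trans hr1)
      rw [norm_mul, Real.norm_eq_abs, Real.norm_eq_abs, abs_of_nonneg (hG0 y),
        abs_of_nonpos hlog0]
      exact mul_le_mul_of_nonneg_right (hGub y hy) (by linarith)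
    have hfint : IntegrableOn (fun y : E2 => G y * Real.log ‖a - y‖) (Metric.ball a r) := by
      refine Integrable.mono (hL.const_mul B₁) (hfmeas a) ?_
      refine (ae_restrict_iff' measurableSet_ball).2 (ae_of_all _ fun y hy => ?_)
      exact (hbd y hy).trans ((le_abs_self _).trans_eq (Real.norm_eq_abs _).symm)
    -- Goal 3 : lower bound at a
    have goal3 : c ≤ -F₂ n (aPt n) := by
      have hsubS : Metric.ball a (r/2) ⊆ Metric.ball a r := Metric.ball_subset_ball (by linarith)
      set Glb : ℝ := Real.exp (-(2*M)) * ((n:ℝ)/2) ^ (ℓ - q) with hGlb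
      have hGlb0 : 0 ≤ Glb := by positivity
      set D : ℝ := Glb * (n:ℝ)^q with hD
      have hfS : ∀ y ∈ Metric.ball a (r/2) \ {a}, G y * Real.log ‖a - y‖ ≤ -D := by
        intro y hy
        obtain ⟨hyS, hya⟩ := hy
        have hd2 : ‖a - y‖ < r/2 := by
          rw [Metric.mem_ball, dist_eq_norm, ← norm_sub_rev] at hyS; exact hyS
        have hpos : 0 < ‖a - y‖ := by
          rw [norm_pos_iff, sub_ne_zero]
          exact fun h => hya h.symm
        have hlog : Real.log ‖a - y‖ ≤ -(n:ℝ)^q := by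
          rw [← hlogr]
          exact Real.log_le_log hpos (by linarith)
        have hylb : (n:ℝ)/2 ≤ ‖y‖ := by
          have h1 : ‖a‖ - ‖a - y‖ ≤ ‖a - (a - y)‖ := norm_sub_norm_le _ _
          simp only [sub_sub_cancel] at h1
          rw [hna] at h1
          linarith
        have hη : η₀ (r⁻¹ • (y - a)) = 1 := by
          refine hone _ ?_
          rw [norm_smul, Real.norm_eq_abs, abs_of_nonneg (inv_nonneg.2 hr0.le), norm_sub_rev]
          calc r⁻¹ * ‖a - y‖ ≤ r⁻¹ * (r/2) :=
                mul_le_mul_of_nonneg_left hd2.le (inv_nonneg.2 hr0.le)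
            _ = 1/2 := by field_simp
        have hGlbG : Glb ≤ G y := by
          have e1 : Real.exp (-(2*M)) ≤ Real.exp (2 * ξ y) :=
            Real.exp_le_exp.2 (by have := (abs_le.1 (hM y)).1; linarith)
          have e2 : ((n:ℝ)/2) ^ (ℓ - q) ≤ ‖y‖ ^ (2*αs) := by
            rw [h2αs]
            exact Real.rpow_le_rpow (by positivity) hylb hlq.le
          calc Glb = Real.exp (-(2*M)) * ((n:ℝ)/2) ^ (ℓ - q) * 1 := by rw [mul_one]
            _ ≤ Real.exp (2 * ξ y) * ‖y‖ ^ (2*αs) * η₀ (r⁻¹ • (y - a)) := by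
                rw [hη]
                exact mul_le_mul (mul_le_mul e1 e2 (by positivity) (Real.exp_nonneg _))
                  le_rfl zero_le_one (by positivity)
            _ = G y := rfl
        have hlog0 : Real.log ‖a - y‖ ≤ 0 :=
          Real.log_nonpos (norm_nonneg _) (le_trans hd2.le (by linarith))
        calc G y * Real.log ‖a - y‖ ≤ Glb * Real.log ‖a - y‖ :=
              mul_le_mul_of_nonpos_right hGlbG hlog0
          _ ≤ Glb * (-(n:ℝ)^q) := mul_le_mul_of_nonneg_left hlog hGlb0
          _ = -D := by rw [hD]; ring
      have hvolS : (volume (Metric.ball a (r/2) \ {a})).toReal = (r/2)^2 * pi' := by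
        rw [measure_diff_null (measure_singleton a), volE2 a (by linarith),
          ENNReal.toReal_mul, ENNReal.toReal_ofReal (by positivity)]
      have hIS : ∫ y in Metric.ball a (r/2) \ {a}, G y * Real.log ‖a - y‖ ≤
          -(D * ((r/2)^2 * pi')) := by
        calc ∫ y in Metric.ball a (r/2) \ {a}, G y * Real.log ‖a - y‖
            ≤ ∫ _y in Metric.ball a (r/2) \ {a}, (-D) :=
              setIntegral_mono_on (hfint.mono_set (fun y hy => hsubS hy.1))
                (integrableOn_const (lt_of_le_of_lt
                  (measure_mono (fun y hy => hsubS hy.1)) measure_ball_lt_top).ne)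
                (measurableSet_ball.diff (measurableSet_singleton a)) hfS
          _ = (volume (Metric.ball a (r/2) \ {a})).toReal • (-D) := setIntegral_const _
          _ = -(D * ((r/2)^2 * pi')) := by rw [hvolS, smul_eq_mul]; ring
      have hS'int : ∫ y in Metric.ball a (r/2), G y * Real.log ‖a - y‖ ≤
          -(D * ((r/2)^2 * pi')) := by
        rw [← setIntegral_congr_set (diff_ae_eq_self.2
          (measure_mono_null Set.inter_subset_right (measure_singleton a)))]
        exact hIS
      have hrest : ∫ y in Metric.ball a r \ Metric.ball a (r/2), G y * Real.log ‖a - y‖ ≤ 0 := by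
        refine setIntegral_nonpos (measurableSet_ball.diff measurableSet_ball) fun y hy => ?_
        have hlog0 : Real.log ‖a - y‖ ≤ 0 :=
          Real.log_nonpos (norm_nonneg _) ((hay y hy.1).le.trans hr1)
        exact mul_nonpos_iff.2 (Or.inl ⟨hG0 y, hlog0⟩)
      have hI : ∫ y in Metric.ball a r, G y * Real.log ‖a - y‖ ≤ -(D * ((r/2)^2 * pi')) := by
        have hsplit2 : Metric.ball a r =
            Metric.ball a (r/2) ∪ (Metric.ball a r \ Metric.ball a (r/2)) :=
          (Set.union_diff_cancel hsubS).symm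
        rw [hsplit2, setIntegral_union Set.disjoint_sdiff_right
          (measurableSet_ball.diff measurableSet_ball)
          (hfint.mono_set hsubS) (hfint.mono_set Set.diff_subset)]
        linarith
      have e1 : r ^ (-(2:ℝ)) * (r/2)^2 = 1/4 := by
        rw [Real.rpow_neg hr0.le, Real.rpow_two]
        field_simp
        ring
      have e2 : (n:ℝ)^(-ℓ) * (n:ℝ)^(ℓ-q) * (n:ℝ)^q = 1 := by
        rw [← Real.rpow_add hn0, ← Real.rpow_add hn0,
          show -ℓ + (ℓ - q) + q = 0 by ring, Real.rpow_zero]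
      have hD2 : D = Real.exp (-(2*M)) * ((n:ℝ)^(ℓ-q) / P2) * (n:ℝ)^q := by
        rw [hD, hGlb, Real.div_rpow hn0.le (by norm_num : (0:ℝ) ≤ 2), hP2]
      have hkey : (r ^ (-(2:ℝ)) * (n:ℝ)^(-ℓ)) * (D * ((r/2)^2 * pi')) = c := by
        rw [hD2]
        calc (r ^ (-(2:ℝ)) * (n:ℝ)^(-ℓ)) *
            (Real.exp (-(2*M)) * ((n:ℝ)^(ℓ-q) / P2) * (n:ℝ)^q * ((r/2)^2 * pi'))
            = (r ^ (-(2:ℝ)) * (r/2)^2) * ((n:ℝ)^(-ℓ) * (n:ℝ)^(ℓ-q) * (n:ℝ)^q) *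
              (Real.exp (-(2*M)) * pi' / P2) := by ring
          _ = (1/4) * 1 * (Real.exp (-(2*M)) * pi' / P2) := by rw [e1, e2]
          _ = c := by rw [hc]; ring
      have h2 : F₂ n (aPt n) ≤ pref * (-(D * ((r/2)^2 * pi'))) := by
        rw [hF]
        exact mul_le_mul_of_nonneg_left hI hpref0.le
      have h3 : pref * (-(D * ((r/2)^2 * pi'))) = -c := by
        rw [hpref, ← hkey]; ring
      linarith
    -- Goal 1 : nonnegativity at -a
    have hblb : ∀ y ∈ Metric.ball a r, 1 ≤ ‖-a - y‖ ∧ ‖-a - y‖ ≤ 2*(n:ℝ)+1 := by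
      intro y hy
      have haa : ‖a + a‖ = 2*(n:ℝ) := by
        rw [← two_smul ℝ a, norm_smul, hna]; simp
      have hrew : ‖-a - y‖ = ‖(a + a) - (a - y)‖ := by
        rw [← norm_neg]; congr 1; abel
      constructor
      · have h1 : ‖a + a‖ - ‖a - y‖ ≤ ‖(a + a) - (a - y)‖ := norm_sub_norm_le _ _
        have h2 := hay y hy
        rw [hrew]; rw [haa] at h1; linarith
      · have h1 : ‖(a + a) - (a - y)‖ ≤ ‖a + a‖ + ‖a - y‖ := norm_sub_le _ _
        have h2 := hay y hy
        rw [hrew]; rw [haa] at h1; linarith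
    have goal1 : 0 ≤ F₂ n (-aPt n) := by
      rw [hF]
      refine mul_nonneg hpref0.le (setIntegral_nonneg measurableSet_ball fun y hy => ?_)
      exact mul_nonneg (hG0 y) (Real.log_nonneg (hblb y hy).1)
    -- Goal 2 : upper bound at -a
    have e2 : (n:ℝ)^(-ℓ) * (n:ℝ)^(ℓ-q) * (n:ℝ)^q = 1 := by
      rw [← Real.rpow_add hn0, ← Real.rpow_add hn0,
        show -ℓ + (ℓ - q) + q = 0 by ring, Real.rpow_zero]
    have e3 : r ^ (-(2:ℝ)) * r^2 = 1 := by
      rw [Real.rpow_neg hr0.le, Real.rpow_two]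
      field_simp
    have h5 : ((n:ℝ)+1)^(ℓ-q) ≤ P2 * (n:ℝ)^(ℓ-q) := by
      rw [hP2, ← Real.mul_rpow (by norm_num : (0:ℝ) ≤ 2) hn0.le]
      exact Real.rpow_le_rpow (by positivity) (by linarith) hlq.le
    have goal2 : F₂ n (-aPt n) ≤ C * (n : ℝ) ^ (-ℓ + 2*αs) * Real.log (2*(n:ℝ)+1) := by
      set L : ℝ := Real.log (2*(n:ℝ)+1) with hLdef
      have hub : ∀ y ∈ Metric.ball a r, ‖G y * Real.log ‖-a - y‖‖ ≤ B₁ * L := by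
        intro y hy
        obtain ⟨hb1, hb2⟩ := hblb y hy
        have hlogy0 : 0 ≤ Real.log ‖-a - y‖ := Real.log_nonneg hb1
        have hlogle : Real.log ‖-a - y‖ ≤ L := Real.log_le_log (by linarith) hb2
        rw [norm_mul, Real.norm_eq_abs, Real.norm_eq_abs, abs_of_nonneg (hG0 y),
          abs_of_nonneg hlogy0]
        exact mul_le_mul (hGub y hy) hlogle hlogy0 hB₁0
      have hnorm : ‖∫ y in Metric.ball a r, G y * Real.log ‖-a - y‖‖ ≤
          (B₁ * L) * (volume (Metric.ball a r)).toReal :=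
        norm_setIntegral_le_of_norm_le_const measure_ball_lt_top hub
      have hvol : (volume (Metric.ball a r)).toReal = r^2 * pi' := by
        rw [volE2 a hr0.le, ENNReal.toReal_mul, ENNReal.toReal_ofReal (by positivity)]
      have hstep : F₂ n (-aPt n) ≤ pref * ((B₁ * L) * (r^2 * pi')) := by
        rw [hF]
        refine mul_le_mul_of_nonneg_left ?_ hpref0.le
        refine le_trans (le_abs_self _) ?_
        rw [← Real.norm_eq_abs, ← hvol]
        exact hnorm
      have hmain : pref * (B₁ * (r^2 * pi')) ≤ C * (n:ℝ)^(-ℓ+2*αs) := by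
        calc pref * (B₁ * (r^2 * pi'))
            = (r ^ (-(2:ℝ)) * r^2) *
              ((n:ℝ)^(-ℓ) * (Real.exp (2*M) * (((n:ℝ)+1)^(ℓ-q) * pi'))) := by
              rw [hpref, hB₁]; ring
          _ = (n:ℝ)^(-ℓ) * (Real.exp (2*M) * (((n:ℝ)+1)^(ℓ-q) * pi')) := by rw [e3, one_mul]
          _ ≤ (n:ℝ)^(-ℓ) * (Real.exp (2*M) * ((P2 * (n:ℝ)^(ℓ-q)) * pi')) := by
              refine mul_le_mul_of_nonneg_left (mul_le_mul_of_nonneg_left ?_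
                (Real.exp_nonneg _)) (Real.rpow_nonneg hn0.le _)
              exact mul_le_mul_of_nonneg_right h5 hpi0.le
          _ = C * ((n:ℝ)^(-ℓ) * (n:ℝ)^(ℓ-q)) := by rw [hC]; ring
          _ = C * (n:ℝ)^(-ℓ+2*αs) := by
              rw [← Real.rpow_add hn0, show -ℓ + (ℓ - q) = -ℓ + 2*αs by rw [h2αs]]
      calc F₂ n (-aPt n) ≤ (pref * (B₁ * (r^2 * pi'))) * L := hstep.trans_eq (by ring)
        _ ≤ (C * (n:ℝ)^(-ℓ+2*αs)) * L := mul_le_mul_of_nonneg_right hmain hlog2n0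
        _ = C * (n:ℝ)^(-ℓ+2*αs) * L := by ring
    -- Goal 4 : upper bound for -F₂ n a
    have goal4 : -F₂ n (aPt n) ≤ 2 * C := by
      have hIabs : ‖∫ y in Metric.ball a r, G y * Real.log ‖a - y‖‖ ≤
          B₁ * ((-Real.log r + 1) * (r^2 * pi')) := by
        calc ‖∫ y in Metric.ball a r, G y * Real.log ‖a - y‖‖
            ≤ ∫ y in Metric.ball a r, ‖G y * Real.log ‖a - y‖‖ :=
              norm_integral_le_integral_norm _
          _ ≤ ∫ y in Metric.ball a r, B₁ * (-Real.log ‖a - y‖) :=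
              setIntegral_mono_on hfint.norm (hL.const_mul B₁) measurableSet_ball hbd
          _ = B₁ * ∫ y in Metric.ball a r, -Real.log ‖a - y‖ := integral_const_mul _ _
          _ ≤ B₁ * ((-Real.log r + 1) * (r^2 * pi')) :=
              mul_le_mul_of_nonneg_left (logIntegralBound a hr0 hr1) hB₁0
      have h2 : -F₂ n (aPt n) ≤ pref * (B₁ * ((-Real.log r + 1) * (r^2 * pi'))) := by
        rw [hF, ← mul_neg]
        refine mul_le_mul_of_nonneg_left ?_ hpref0.le
        exact (neg_le_abs _).trans (((Real.norm_eq_abs _).symm.le).trans hIabs)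
      rw [hlogr, neg_neg] at h2
      have hq2 : (n:ℝ)^q + 1 ≤ 2 * (n:ℝ)^q := by linarith
      have hfinal : pref * (B₁ * (((n:ℝ)^q + 1) * (r^2 * pi'))) ≤ 2 * C := by
        calc pref * (B₁ * (((n:ℝ)^q + 1) * (r^2 * pi')))
            = (r ^ (-(2:ℝ)) * r^2) * ((Real.exp (2*M) * pi') *
              ((n:ℝ)^(-ℓ) * (((n:ℝ)+1)^(ℓ-q) * ((n:ℝ)^q + 1)))) := by
              rw [hpref, hB₁]; ring
          _ = (Real.exp (2*M) * pi') *
              ((n:ℝ)^(-ℓ) * (((n:ℝ)+1)^(ℓ-q) * ((n:ℝ)^q + 1))) := by rw [e3, one_mul]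
          _ ≤ (Real.exp (2*M) * pi') *
              ((n:ℝ)^(-ℓ) * ((P2 * (n:ℝ)^(ℓ-q)) * (2 * (n:ℝ)^q))) := by
              refine mul_le_mul_of_nonneg_left (mul_le_mul_of_nonneg_left ?_
                (Real.rpow_nonneg hn0.le _)) (by positivity)
              exact mul_le_mul h5 hq2 (by positivity) (by positivity)
          _ = 2 * C * ((n:ℝ)^(-ℓ) * (n:ℝ)^(ℓ-q) * (n:ℝ)^q) := by rw [hC]; ring
          _ = 2 * C := by rw [e2, mul_one]
      linarith
    -- upper bound for goal2's value
    have goal2' : F₂ n (-aPt n) ≤ 3 * C := by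
      refine goal2.trans ?_
      have h1 : (n:ℝ) ^ (-ℓ + 2*αs) ≤ (n:ℝ)⁻¹ := by
        rw [show -ℓ + 2*αs = -q by rw [h2αs]; ring, ← Real.rpow_neg_one]
        exact Real.rpow_le_rpow_of_exponent_le hnR (by linarith)
      have h2 : Real.log (2*(n:ℝ)+1) ≤ 3*(n:ℝ) := by
        have := Real.log_le_sub_one_of_pos (show (0:ℝ) < 2*(n:ℝ)+1 by linarith)
        linarith
      calc C * (n : ℝ) ^ (-ℓ + 2*αs) * Real.log (2*(n:ℝ)+1)
          ≤ C * (n:ℝ)⁻¹ * (3*(n:ℝ)) := by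
            refine mul_le_mul (mul_le_mul_of_nonneg_left h1 hC0.le) h2 hlog2n0 ?_
            positivity
        _ = 3 * C := by field_simp
      done
    exact ⟨⟨goal1, goal2, goal3⟩, by linarith⟩
  refine ⟨c, C, hc0, hC0, ⟨1, fun n hn => (key n hn).1⟩, ?_⟩
  have hev : ∀ᶠ n : ℕ in atTop, c ≤ |F₂ n (aPt n) - F₂ n (-aPt n)| := by
    filter_upwards [eventually_ge_atTop 1] with n hn
    obtain ⟨⟨g1, _, g3⟩, _⟩ := key n hn
    calc c ≤ -F₂ n (aPt n) := g3
      _ ≤ -(F₂ n (aPt n) - F₂ n (-aPt n)) := by linarith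
      _ ≤ |F₂ n (aPt n) - F₂ n (-aPt n)| := neg_le_abs _
  refine le_liminf_of_le ?_ hev
  refine Filter.IsCoboundedUnder.of_frequently_le (a := 5*C) ?_
  refine Filter.Eventually.frequently ?_
  filter_upwards [eventually_ge_atTop 1] with n hn
  obtain ⟨⟨g1, _, g3⟩, g4⟩ := key n hn
  have : F₂ n (aPt n) - F₂ n (-aPt n) ≤ 0 := by linarith
  rw [abs_of_nonpos this]
  linarith
end
end
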